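/- arXiv:0903.4785 — 5 statements merged into one kernel-verified Lean document; each statement's English description precedes it below -/
import Mathlib

section
/- Let N ≥ 1, let w ≥ 2 be even, let n be an integer with 0 < n < w, set ñ = w − n, let D > 1 and let h be a positive integer. Then only finitely many matrices (a b; c d) ∈ Γ₀(N) satisfy a·c·(ah/D + b)·(ch/D + d) < 0, and the sum S_{5,h}(z) = Σ over such matrices of 1/((az + ah/D + b)^{ñ+1}·(cz + ch/D + d)^{n+1}) equals 2·Σ_{(a b; c d) ∈ Γ₀(N), a,c,k,ℓ > 0, D = ka+ℓc, h = −kb−ℓd} 1/((az − ℓ/D)^{ñ+1}·(cz + k/D)^{n+1}) + 2·Σ_{(a b; c d) ∈ Γ₀(N), a,k,ℓ > 0, c < 0, D = ka−ℓc, h = −kb+ℓd} 1/((az + ℓ/D)^{ñ+1}·(cz + k/D)^{n+1}) for every z in the upper half-plane. -/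
open Complex

noncomputable section

/-! ### Auxiliary definitions and lemmas -/

def Sset (N D : ℕ) (h : ℤ) : Set (ℤ × ℤ × ℤ × ℤ) :=
  {p | p.1 * p.2.2.2 - p.2.1 * p.2.2.1 = 1 ∧ (N : ℤ) ∣ p.2.2.1 ∧
    (p.1 : ℝ) * p.2.2.1 * ((p.1 : ℝ) * h / D + p.2.1) *
      ((p.2.2.1 : ℝ) * h / D + p.2.2.2) < 0}

def T1set (N D : ℕ) (h : ℤ) : Set (ℤ × ℤ × ℤ × ℤ × ℤ × ℤ) :=
  {q | q.1 * q.2.2.2.1 - q.2.1 * q.2.2.1 = 1 ∧ (N : ℤ) ∣ q.2.2.1 ∧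
    0 < q.1 ∧ 0 < q.2.2.1 ∧ 0 < q.2.2.2.2.1 ∧ 0 < q.2.2.2.2.2 ∧
    (D : ℤ) = q.2.2.2.2.1 * q.1 + q.2.2.2.2.2 * q.2.2.1 ∧
    h = -(q.2.2.2.2.1 * q.2.1) - q.2.2.2.2.2 * q.2.2.2.1}

def T2set (N D : ℕ) (h : ℤ) : Set (ℤ × ℤ × ℤ × ℤ × ℤ × ℤ) :=
  {q | q.1 * q.2.2.2.1 - q.2.1 * q.2.2.1 = 1 ∧ (N : ℤ) ∣ q.2.2.1 ∧
    0 < q.1 ∧ q.2.2.1 < 0 ∧ 0 < q.2.2.2.2.1 ∧ 0 < q.2.2.2.2.2 ∧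
    (D : ℤ) = q.2.2.2.2.1 * q.1 - q.2.2.2.2.2 * q.2.2.1 ∧
    h = -(q.2.2.2.2.1 * q.2.1) + q.2.2.2.2.2 * q.2.2.2.1}

lemma l_realcond (D : ℕ) (hD : 0 < D) (h a b c d : ℤ) :
    ((a:ℝ) * c * ((a:ℝ) * h / D + b) * ((c:ℝ) * h / D + d) < 0) ↔
      a * c * (a * h + b * D) * (c * h + d * D) < 0 := by
  have hDR : (0:ℝ) < (D:ℝ) := by exact_mod_cast hD
  have e : (a:ℝ) * c * ((a:ℝ) * h / D + b) * ((c:ℝ) * h / D + d)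
      = ((a * c * (a * h + b * D) * (c * h + d * D) : ℤ) : ℝ) / (D:ℝ)^2 := by
    have hne : (D:ℝ) ≠ 0 := hDR.ne'
    have h1 : (a:ℝ) * h / D + b = ((a:ℝ) * h + b * D) / D := by field_simp
    have h2 : (c:ℝ) * h / D + d = ((c:ℝ) * h + d * D) / D := by field_simp
    rw [h1, h2]
    push_cast
    ring
  rw [e, div_lt_iff₀ (by positivity), zero_mul, Int.cast_lt_zero]

lemma l_rel (D : ℕ) (h a b c d : ℤ) (hdet : a * d - b * c = 1) :
    a * (c * h + d * D) - c * (a * h + b * D) = D := by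
  linear_combination (D:ℤ) * hdet

lemma l_key (D : ℕ) (hD : 0 < D) (h a b c d : ℤ) (hdet : a * d - b * c = 1)
    (hc : a * c * (a * h + b * D) * (c * h + d * D) < 0) :
    0 < a * (c * h + d * D) ∧ c * (a * h + b * D) < 0 := by
  have hrel := l_rel D h a b c d hdet
  have hD0 : (0:ℤ) < (D:ℤ) := by exact_mod_cast hD
  have huv : (a * (c * h + d * D)) * (c * (a * h + b * D)) < 0 := by nlinarith [hc]
  constructor <;> nlinarith [huv, hrel, hD0]

lemma l_T1rel (D : ℕ) (h a b c d k l : ℤ) (hdet : a * d - b * c = 1)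
    (hDeq : (D:ℤ) = k * a + l * c) (hheq : h = -(k * b) - l * d) :
    a * h + b * D = -l ∧ c * h + d * D = k :=
  ⟨by linear_combination a * hheq + b * hDeq - l * hdet,
   by linear_combination c * hheq + d * hDeq + k * hdet⟩

lemma l_T2rel (D : ℕ) (h a b c d k l : ℤ) (hdet : a * d - b * c = 1)
    (hDeq : (D:ℤ) = k * a - l * c) (hheq : h = -(k * b) + l * d) :
    a * h + b * D = l ∧ c * h + d * D = k :=
  ⟨by linear_combination a * hheq + b * hDeq + l * hdet,
   by linear_combination c * hheq + d * hDeq + k * hdet⟩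

lemma l_S1heq (D : ℕ) (h a b c d : ℤ) (hdet : a * d - b * c = 1) :
    h = -((c * h + d * D) * b) - (-(a * h + b * D)) * d := by
  linear_combination -h * hdet

lemma l_S2heq (D : ℕ) (h a b c d : ℤ) (hdet : a * d - b * c = 1) :
    h = -((c * h + d * D) * b) + (a * h + b * D) * d := by
  linear_combination -h * hdet

lemma l_cast1 (D : ℕ) (hD : 0 < D) (h a b l : ℤ) (hA : a * h + b * (D:ℤ) = -l) (z : ℂ) :
    (a:ℂ) * z + (a:ℂ) * h / D + b = (a:ℂ) * z - (l:ℂ) / D := by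
  have hDC : (D:ℂ) ≠ 0 := Nat.cast_ne_zero.mpr hD.ne'
  have e : ((a:ℂ) * h + b * D) = -l := by exact_mod_cast congrArg (Int.cast : ℤ → ℂ) hA
  field_simp
  linear_combination e

lemma l_cast2 (D : ℕ) (hD : 0 < D) (h a b l : ℤ) (hA : a * h + b * (D:ℤ) = l) (z : ℂ) :
    (a:ℂ) * z + (a:ℂ) * h / D + b = (a:ℂ) * z + (l:ℂ) / D := by
  have hDC : (D:ℂ) ≠ 0 := Nat.cast_ne_zero.mpr hD.ne'
  have e : ((a:ℂ) * h + b * D) = l := by exact_mod_cast congrArg (Int.cast : ℤ → ℂ) hA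
  field_simp
  linear_combination e

lemma l_neg (w n : ℕ) (hwe : Even w) (hn : n ≤ w) (D : ℕ) (h : ℤ) (z : ℂ) (a b c d : ℤ) :
    1 / ((((-a : ℤ):ℂ) * z + ((-a : ℤ):ℂ) * h / D + ((-b : ℤ):ℂ)) ^ (w - n + 1) *
        (((-c : ℤ):ℂ) * z + ((-c : ℤ):ℂ) * h / D + ((-d : ℤ):ℂ)) ^ (n + 1)) =
    1 / (((a:ℂ) * z + (a:ℂ) * h / D + (b:ℂ)) ^ (w - n + 1) *
        ((c:ℂ) * z + (c:ℂ) * h / D + (d:ℂ)) ^ (n + 1)) := by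
  push_cast
  have e1 : (-1:ℂ) ^ (w - n + 1) * (-1:ℂ) ^ (n + 1) = 1 := by
    rw [← pow_add]
    apply Even.neg_one_pow
    obtain ⟨t, ht⟩ := hwe
    exact ⟨t + 1, by omega⟩
  congr 1
  rw [show -(a:ℂ) * z + -(a:ℂ) * h / D + -(b:ℂ)
      = -((a:ℂ) * z + (a:ℂ) * h / D + b) from by ring,
    show -(c:ℂ) * z + -(c:ℂ) * h / D + -(d:ℂ)
      = -((c:ℂ) * z + (c:ℂ) * h / D + d) from by ring,
    neg_pow ((a:ℂ) * z + (a:ℂ) * h / D + b) (w - n + 1),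
    neg_pow ((c:ℂ) * z + (c:ℂ) * h / D + d) (n + 1)]
  calc ((-1:ℂ) ^ (w - n + 1) * ((a:ℂ) * z + (a:ℂ) * h / D + b) ^ (w - n + 1)) *
        ((-1:ℂ) ^ (n + 1) * ((c:ℂ) * z + (c:ℂ) * h / D + d) ^ (n + 1))
      = ((-1:ℂ) ^ (w - n + 1) * (-1:ℂ) ^ (n + 1)) *
        (((a:ℂ) * z + (a:ℂ) * h / D + b) ^ (w - n + 1) *
          ((c:ℂ) * z + (c:ℂ) * h / D + d) ^ (n + 1)) := by ring
    _ = ((a:ℂ) * z + (a:ℂ) * h / D + b) ^ (w - n + 1) *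
          ((c:ℂ) * z + (c:ℂ) * h / D + d) ^ (n + 1) := by rw [e1, one_mul]

lemma l_bound (D : ℕ) (hD : 0 < D) (h a b c d : ℤ) (hdet : a * d - b * c = 1)
    (hc : a * c * (a * h + b * D) * (c * h + d * D) < 0) :
    |a| ≤ D ∧ |c| ≤ D ∧ |a * h + b * D| ≤ D ∧ |c * h + d * D| ≤ D := by
  obtain ⟨hu, hv⟩ := l_key D hD h a b c d hdet hc
  have hrel := l_rel D h a b c d hdet
  have ha : a ≠ 0 := by rintro rfl; simp at hu
  have hC : c * h + d * D ≠ 0 := by rintro hC; rw [hC] at hu; simp at hu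
  have hcne : c ≠ 0 := by rintro rfl; simp at hv
  have hA : a * h + b * D ≠ 0 := by rintro hA; rw [hA] at hv; simp at hv
  have huD : a * (c * h + d * D) ≤ D := by linarith
  have hvD : -(c * (a * h + b * D)) ≤ D := by linarith
  refine ⟨?_, ?_, ?_, ?_⟩
  · calc |a| ≤ |a| * |c * h + d * D| :=
        le_mul_of_one_le_right (abs_nonneg _) (Int.one_le_abs hC)
      _ = |a * (c * h + d * D)| := (abs_mul _ _).symm
      _ = a * (c * h + d * D) := abs_of_pos hu
      _ ≤ D := huD
  · calc |c| ≤ |c| * |a * h + b * D| :=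
        le_mul_of_one_le_right (abs_nonneg _) (Int.one_le_abs hA)
      _ = |c * (a * h + b * D)| := (abs_mul _ _).symm
      _ = -(c * (a * h + b * D)) := abs_of_neg hv
      _ ≤ D := hvD
  · calc |a * h + b * D| ≤ |c| * |a * h + b * D| :=
        le_mul_of_one_le_left (abs_nonneg _) (Int.one_le_abs hcne)
      _ = |c * (a * h + b * D)| := (abs_mul _ _).symm
      _ = -(c * (a * h + b * D)) := abs_of_neg hv
      _ ≤ D := hvD
  · calc |c * h + d * D| ≤ |a| * |c * h + d * D| :=
        le_mul_of_one_le_left (abs_nonneg _) (Int.one_le_abs ha)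
      _ = |a * (c * h + d * D)| := (abs_mul _ _).symm
      _ = a * (c * h + d * D) := abs_of_pos hu
      _ ≤ D := huD

lemma finS (N D : ℕ) (hD : 0 < D) (h : ℤ) : (Sset N D h).Finite := by
  have hDZ : ((D:ℤ)) ≠ 0 := by exact_mod_cast hD.ne'
  apply Set.Finite.of_finite_image
    (f := fun p : ℤ × ℤ × ℤ × ℤ =>
      (p.1, p.2.2.1, p.1 * h + p.2.1 * D, p.2.2.1 * h + p.2.2.2 * D))
  · apply Set.Finite.subset
      (Set.finite_Icc ((-(D:ℤ), -(D:ℤ), -(D:ℤ), -(D:ℤ))) (((D:ℤ), (D:ℤ), (D:ℤ), (D:ℤ))))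
    rintro x ⟨⟨a, b, c, d⟩, ⟨hdet, _, hcond⟩, rfl⟩
    simp only at hdet hcond
    rw [l_realcond D hD h a b c d] at hcond
    obtain ⟨h1, h2, h3, h4⟩ := l_bound D hD h a b c d hdet hcond
    rw [abs_le] at h1 h2 h3 h4
    simp only [Set.mem_Icc, Prod.le_def]
    exact ⟨⟨h1.1, h2.1, h3.1, h4.1⟩, ⟨h1.2, h2.2, h3.2, h4.2⟩⟩
  · rintro ⟨a, b, c, d⟩ _ ⟨a', b', c', d'⟩ _ heq
    simp only [Prod.mk.injEq] at heq ⊢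
    obtain ⟨ha, hc, hA, hC⟩ := heq
    subst ha hc
    refine ⟨rfl, ?_, rfl, ?_⟩
    · exact mul_right_cancel₀ hDZ (by linarith)
    · exact mul_right_cancel₀ hDZ (by linarith)

lemma finT1 (N D : ℕ) (hD : 0 < D) (h : ℤ) : (T1set N D h).Finite := by
  have hDZ : ((D:ℤ)) ≠ 0 := by exact_mod_cast hD.ne'
  apply Set.Finite.of_finite_image
    (f := fun q : ℤ × ℤ × ℤ × ℤ × ℤ × ℤ => (q.1, q.2.2.1, q.2.2.2.2.1, q.2.2.2.2.2))
  · apply Set.Finite.subset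
      (Set.finite_Icc (((1:ℤ), (1:ℤ), (1:ℤ), (1:ℤ))) (((D:ℤ), (D:ℤ), (D:ℤ), (D:ℤ))))
    rintro x ⟨⟨a, b, c, d, k, l⟩, ⟨_, _, ha, hc, hk, hl, hDeq, _⟩, rfl⟩
    simp only at ha hc hk hl hDeq
    simp only [Set.mem_Icc, Prod.le_def]
    refine ⟨⟨ha, hc, hk, hl⟩, ?_, ?_, ?_, ?_⟩ <;> nlinarith
  · rintro ⟨a, b, c, d, k, l⟩ ⟨hdet, _, _, _, _, _, hDeq, hheq⟩
      ⟨a', b', c', d', k', l'⟩ ⟨hdet', _, _, _, _, _, hDeq', hheq'⟩ heq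
    simp only at hdet hDeq hheq hdet' hDeq' hheq'
    simp only [Prod.mk.injEq] at heq ⊢
    obtain ⟨h1, h2, h3, h4⟩ := heq
    subst h1 h2 h3 h4
    obtain ⟨e1, e2⟩ := l_T1rel D h a b c d k l hdet hDeq hheq
    obtain ⟨e1', e2'⟩ := l_T1rel D h a b' c d' k l hdet' hDeq' hheq'
    refine ⟨rfl, ?_, rfl, ?_, rfl, rfl⟩
    · exact mul_right_cancel₀ hDZ (by linarith)
    · exact mul_right_cancel₀ hDZ (by linarith)

lemma finT2 (N D : ℕ) (hD : 0 < D) (h : ℤ) : (T2set N D h).Finite := by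
  have hDZ : ((D:ℤ)) ≠ 0 := by exact_mod_cast hD.ne'
  apply Set.Finite.of_finite_image
    (f := fun q : ℤ × ℤ × ℤ × ℤ × ℤ × ℤ => (q.1, q.2.2.1, q.2.2.2.2.1, q.2.2.2.2.2))
  · apply Set.Finite.subset
      (Set.finite_Icc (((1:ℤ), -(D:ℤ), (1:ℤ), (1:ℤ))) (((D:ℤ), (-1:ℤ), (D:ℤ), (D:ℤ))))
    rintro x ⟨⟨a, b, c, d, k, l⟩, ⟨_, _, ha, hc, hk, hl, hDeq, _⟩, rfl⟩
    simp only at ha hc hk hl hDeq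
    simp only [Set.mem_Icc, Prod.le_def]
    refine ⟨⟨ha, ?_, hk, hl⟩, ?_, ?_, ?_, ?_⟩ <;> nlinarith
  · rintro ⟨a, b, c, d, k, l⟩ ⟨hdet, _, _, _, _, _, hDeq, hheq⟩
      ⟨a', b', c', d', k', l'⟩ ⟨hdet', _, _, _, _, _, hDeq', hheq'⟩ heq
    simp only at hdet hDeq hheq hdet' hDeq' hheq'
    simp only [Prod.mk.injEq] at heq ⊢
    obtain ⟨h1, h2, h3, h4⟩ := heq
    subst h1 h2 h3 h4
    obtain ⟨e1, e2⟩ := l_T2rel D h a b c d k l hdet hDeq hheq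
    obtain ⟨e1', e2'⟩ := l_T2rel D h a b' c d' k l hdet' hDeq' hheq'
    refine ⟨rfl, ?_, rfl, ?_, rfl, rfl⟩
    · exact mul_right_cancel₀ hDZ (by linarith)
    · exact mul_right_cancel₀ hDZ (by linarith)

lemma S_to_T1 (N D : ℕ) (hD : 0 < D) (h : ℤ) (a b c d : ℤ)
    (hp : (a, b, c, d) ∈ Sset N D h) (ha : 0 < a) (hc : 0 < c) :
    (a, b, c, d, c * h + d * D, -(a * h + b * D)) ∈ T1set N D h := by
  simp only [Sset, Set.mem_setOf_eq] at hp
  obtain ⟨hdet, hdvd, hcond⟩ := hp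
  rw [l_realcond D hD h a b c d] at hcond
  obtain ⟨hu, hv⟩ := l_key D hD h a b c d hdet hcond
  have hrel := l_rel D h a b c d hdet
  simp only [T1set, Set.mem_setOf_eq]
  refine ⟨hdet, hdvd, ha, hc, ?_, ?_, by linarith, l_S1heq D h a b c d hdet⟩
  · nlinarith
  · nlinarith

lemma T1_to_S (N D : ℕ) (hD : 0 < D) (h : ℤ) (a b c d k l : ℤ)
    (hq : (a, b, c, d, k, l) ∈ T1set N D h) :
    (a, b, c, d) ∈ Sset N D h ∧ 0 < a ∧ 0 < c ∧
      k = c * h + d * D ∧ l = -(a * h + b * D) := by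
  simp only [T1set, Set.mem_setOf_eq] at hq
  obtain ⟨hdet, hdvd, ha, hc, hk, hl, hDeq, hheq⟩ := hq
  obtain ⟨e1, e2⟩ := l_T1rel D h a b c d k l hdet hDeq hheq
  simp only [Sset, Set.mem_setOf_eq]
  refine ⟨⟨hdet, hdvd, ?_⟩, ha, hc, e2.symm, by linarith⟩
  rw [l_realcond D hD h a b c d, e1, e2]
  nlinarith [mul_pos (mul_pos ha hc) (mul_pos hl hk)]

lemma S_to_T2 (N D : ℕ) (hD : 0 < D) (h : ℤ) (a b c d : ℤ)
    (hp : (a, b, c, d) ∈ Sset N D h) (ha : 0 < a) (hc : c < 0) :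
    (a, b, c, d, c * h + d * D, a * h + b * D) ∈ T2set N D h := by
  simp only [Sset, Set.mem_setOf_eq] at hp
  obtain ⟨hdet, hdvd, hcond⟩ := hp
  rw [l_realcond D hD h a b c d] at hcond
  obtain ⟨hu, hv⟩ := l_key D hD h a b c d hdet hcond
  have hrel := l_rel D h a b c d hdet
  simp only [T2set, Set.mem_setOf_eq]
  refine ⟨hdet, hdvd, ha, hc, ?_, ?_, by linarith, l_S2heq D h a b c d hdet⟩
  · nlinarith
  · nlinarith

lemma T2_to_S (N D : ℕ) (hD : 0 < D) (h : ℤ) (a b c d k l : ℤ)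
    (hq : (a, b, c, d, k, l) ∈ T2set N D h) :
    (a, b, c, d) ∈ Sset N D h ∧ 0 < a ∧ c < 0 ∧
      k = c * h + d * D ∧ l = a * h + b * D := by
  simp only [T2set, Set.mem_setOf_eq] at hq
  obtain ⟨hdet, hdvd, ha, hc, hk, hl, hDeq, hheq⟩ := hq
  obtain ⟨e1, e2⟩ := l_T2rel D h a b c d k l hdet hDeq hheq
  simp only [Sset, Set.mem_setOf_eq]
  refine ⟨⟨hdet, hdvd, ?_⟩, ha, hc, e2.symm, e1.symm⟩
  rw [l_realcond D hD h a b c d, e1, e2]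
  nlinarith [mul_pos hl hk, mul_neg_of_pos_of_neg ha hc,
    mul_neg_of_neg_of_pos (mul_neg_of_pos_of_neg ha hc) (mul_pos hl hk)]

lemma S_neg (N D : ℕ) (hD : 0 < D) (h : ℤ) (a b c d : ℤ)
    (hp : (a, b, c, d) ∈ Sset N D h) :
    (-a, -b, -c, -d) ∈ Sset N D h ∧ a ≠ 0 ∧ c ≠ 0 := by
  simp only [Sset, Set.mem_setOf_eq] at hp ⊢
  obtain ⟨hdet, hdvd, hcond⟩ := hp
  rw [l_realcond D hD h a b c d] at hcond
  have ha : a ≠ 0 := by rintro rfl; simp at hcond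
  have hc : c ≠ 0 := by rintro rfl; simp at hcond
  refine ⟨⟨by linear_combination hdet, (dvd_neg).mpr hdvd, ?_⟩, ha, hc⟩
  rw [l_realcond D hD h (-a) (-b) (-c) (-d)]
  nlinarith [hcond]

lemma main_sum (N D : ℕ) (hD : 0 < D) (h : ℤ)
    (f : ℤ × ℤ × ℤ × ℤ → ℂ) (v1 v2 : ℤ × ℤ × ℤ × ℤ × ℤ × ℤ → ℂ)
    (sF : Finset (ℤ × ℤ × ℤ × ℤ)) (t1F t2F : Finset (ℤ × ℤ × ℤ × ℤ × ℤ × ℤ))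
    (hsF : ∀ p, p ∈ sF ↔ p ∈ Sset N D h)
    (ht1F : ∀ q, q ∈ t1F ↔ q ∈ T1set N D h)
    (ht2F : ∀ q, q ∈ t2F ↔ q ∈ T2set N D h)
    (hfneg : ∀ a b c d : ℤ, f (-a, -b, -c, -d) = f (a, b, c, d))
    (hv1 : ∀ a b c d k l : ℤ,
      (a, b, c, d, k, l) ∈ T1set N D h → v1 (a, b, c, d, k, l) = f (a, b, c, d))
    (hv2 : ∀ a b c d k l : ℤ,
      (a, b, c, d, k, l) ∈ T2set N D h → v2 (a, b, c, d, k, l) = f (a, b, c, d)) :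
    ∑ p ∈ sF, f p = 2 * ∑ q ∈ t1F, v1 q + 2 * ∑ q ∈ t2F, v2 q := by
  classical
  have half : ∑ p ∈ sF.filter (fun p => ¬ 0 < p.1), f p
      = ∑ p ∈ sF.filter (fun p => 0 < p.1), f p := by
    apply Finset.sum_nbij'
      (i := fun p : ℤ × ℤ × ℤ × ℤ => (-p.1, -p.2.1, -p.2.2.1, -p.2.2.2))
      (j := fun p : ℤ × ℤ × ℤ × ℤ => (-p.1, -p.2.1, -p.2.2.1, -p.2.2.2))
    · rintro ⟨a, b, c, d⟩ hp
      simp only [Finset.mem_filter, hsF] at hp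
      obtain ⟨hmem, hneg⟩ := hp
      obtain ⟨hm2, ha, hc⟩ := S_neg N D hD h a b c d hmem
      simp only [Finset.mem_filter, hsF]
      exact ⟨hm2, by omega⟩
    · rintro ⟨a, b, c, d⟩ hp
      simp only [Finset.mem_filter, hsF] at hp
      obtain ⟨hmem, hpos⟩ := hp
      obtain ⟨hm2, ha, hc⟩ := S_neg N D hD h a b c d hmem
      simp only [Finset.mem_filter, hsF]
      exact ⟨hm2, by omega⟩
    · rintro ⟨a, b, c, d⟩ _; simp
    · rintro ⟨a, b, c, d⟩ _; simp
    · rintro ⟨a, b, c, d⟩ _; exact (hfneg a b c d).symm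
  have e1 : ∑ p ∈ (sF.filter (fun p => 0 < p.1)).filter (fun p => 0 < p.2.2.1), f p
      = ∑ q ∈ t1F, v1 q := by
    apply Finset.sum_nbij'
      (i := fun p : ℤ × ℤ × ℤ × ℤ =>
        (p.1, p.2.1, p.2.2.1, p.2.2.2, p.2.2.1 * h + p.2.2.2 * D, -(p.1 * h + p.2.1 * D)))
      (j := fun q : ℤ × ℤ × ℤ × ℤ × ℤ × ℤ => (q.1, q.2.1, q.2.2.1, q.2.2.2.1))
    · rintro ⟨a, b, c, d⟩ hp
      simp only [Finset.mem_filter, hsF] at hp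
      obtain ⟨⟨hmem, ha⟩, hc⟩ := hp
      rw [ht1F]
      exact S_to_T1 N D hD h a b c d hmem ha hc
    · rintro ⟨a, b, c, d, k, l⟩ hq
      rw [ht1F] at hq
      obtain ⟨hS, ha, hc, _, _⟩ := T1_to_S N D hD h a b c d k l hq
      simp only [Finset.mem_filter, hsF]
      exact ⟨⟨hS, ha⟩, hc⟩
    · rintro ⟨a, b, c, d⟩ _; rfl
    · rintro ⟨a, b, c, d, k, l⟩ hq
      rw [ht1F] at hq
      obtain ⟨_, _, _, hk, hl⟩ := T1_to_S N D hD h a b c d k l hq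
      simp only [Prod.mk.injEq]
      exact ⟨trivial, trivial, trivial, trivial, hk.symm, hl.symm⟩
    · rintro ⟨a, b, c, d⟩ hp
      simp only [Finset.mem_filter, hsF] at hp
      obtain ⟨⟨hmem, ha⟩, hc⟩ := hp
      exact (hv1 a b c d _ _ (S_to_T1 N D hD h a b c d hmem ha hc)).symm
  have e2 : ∑ p ∈ (sF.filter (fun p => 0 < p.1)).filter (fun p => ¬ 0 < p.2.2.1), f p
      = ∑ q ∈ t2F, v2 q := by
    apply Finset.sum_nbij'
      (i := fun p : ℤ × ℤ × ℤ × ℤ =>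
        (p.1, p.2.1, p.2.2.1, p.2.2.2, p.2.2.1 * h + p.2.2.2 * D, p.1 * h + p.2.1 * D))
      (j := fun q : ℤ × ℤ × ℤ × ℤ × ℤ × ℤ => (q.1, q.2.1, q.2.2.1, q.2.2.2.1))
    · rintro ⟨a, b, c, d⟩ hp
      simp only [Finset.mem_filter, hsF] at hp
      obtain ⟨⟨hmem, ha⟩, hc⟩ := hp
      obtain ⟨_, _, hcne⟩ := S_neg N D hD h a b c d hmem
      rw [ht2F]
      exact S_to_T2 N D hD h a b c d hmem ha (by omega)
    · rintro ⟨a, b, c, d, k, l⟩ hq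
      rw [ht2F] at hq
      obtain ⟨hS, ha, hc, _, _⟩ := T2_to_S N D hD h a b c d k l hq
      simp only [Finset.mem_filter, hsF]
      exact ⟨⟨hS, ha⟩, by omega⟩
    · rintro ⟨a, b, c, d⟩ _; rfl
    · rintro ⟨a, b, c, d, k, l⟩ hq
      rw [ht2F] at hq
      obtain ⟨_, _, _, hk, hl⟩ := T2_to_S N D hD h a b c d k l hq
      simp only [Prod.mk.injEq]
      exact ⟨trivial, trivial, trivial, trivial, hk.symm, hl.symm⟩
    · rintro ⟨a, b, c, d⟩ hp
      simp only [Finset.mem_filter, hsF] at hp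
      obtain ⟨⟨hmem, ha⟩, hc⟩ := hp
      obtain ⟨_, _, hcne⟩ := S_neg N D hD h a b c d hmem
      exact (hv2 a b c d _ _ (S_to_T2 N D hD h a b c d hmem ha (by omega))).symm
  have split1 := Finset.sum_filter_add_sum_filter_not sF (fun p => 0 < p.1) f
  have split2 := Finset.sum_filter_add_sum_filter_not
    (sF.filter (fun p => 0 < p.1)) (fun p => 0 < p.2.2.1) f
  rw [← split1, half, ← split2, e1, e2]
  ring


lemma tsum_finite_subtype {α : Type*} (s : Set α) (hs : s.Finite) (g : α → ℂ) :
    (∑' x : ↥s, g ↑x) = ∑ x ∈ hs.toFinset, g x := by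
  rw [tsum_subtype s g,
    tsum_eq_sum (s := hs.toFinset)
      (fun p hp => Set.indicator_of_notMem (fun hm => hp (hs.mem_toFinset.mpr hm)) g)]
  exact Finset.sum_congr rfl fun p hp => Set.indicator_of_mem (hs.mem_toFinset.mp hp) g

/-- only finitely many matrices `(a b; c d) ∈ Γ₀(N)` satisfy
`ac(ah/D+b)(ch/D+d) < 0`, and the corresponding sub-sum `S_{5,h}` of the series
defining `R_n` can be rewritten as two (finite) sums over matrices with positive
auxiliary parameters `k, ℓ`. -/
theorem S5_finite_and_rewrite (N : ℕ) (hN : 1 ≤ N) (w : ℕ) (hw : 2 ≤ w) (hwe : Even w)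
    (n : ℕ) (hn0 : 0 < n) (hnw : n < w) (D : ℕ) (hD : 1 < D) (h : ℤ) (hh : 0 < h) :
    {p : ℤ × ℤ × ℤ × ℤ |
        p.1 * p.2.2.2 - p.2.1 * p.2.2.1 = 1 ∧ (N : ℤ) ∣ p.2.2.1 ∧
        (p.1 : ℝ) * p.2.2.1 * ((p.1 : ℝ) * h / D + p.2.1) *
          ((p.2.2.1 : ℝ) * h / D + p.2.2.2) < 0}.Finite ∧
    ∀ z : ℂ, 0 < z.im →
      (∑' p : {p : ℤ × ℤ × ℤ × ℤ //
          p.1 * p.2.2.2 - p.2.1 * p.2.2.1 = 1 ∧ (N : ℤ) ∣ p.2.2.1 ∧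
          (p.1 : ℝ) * p.2.2.1 * ((p.1 : ℝ) * h / D + p.2.1) *
            ((p.2.2.1 : ℝ) * h / D + p.2.2.2) < 0},
        1 / (((p.1.1 : ℂ) * z + (p.1.1 : ℂ) * h / D + p.1.2.1) ^ (w - n + 1) *
            ((p.1.2.2.1 : ℂ) * z + (p.1.2.2.1 : ℂ) * h / D + p.1.2.2.2) ^ (n + 1))) =
      2 * (∑' q : ℤ × ℤ × ℤ × ℤ × ℤ × ℤ,
        if q.1 * q.2.2.2.1 - q.2.1 * q.2.2.1 = 1 ∧ (N : ℤ) ∣ q.2.2.1 ∧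
            0 < q.1 ∧ 0 < q.2.2.1 ∧ 0 < q.2.2.2.2.1 ∧ 0 < q.2.2.2.2.2 ∧
            (D : ℤ) = q.2.2.2.2.1 * q.1 + q.2.2.2.2.2 * q.2.2.1 ∧
            h = -(q.2.2.2.2.1 * q.2.1) - q.2.2.2.2.2 * q.2.2.2.1 then
          1 / (((q.1 : ℂ) * z - (q.2.2.2.2.2 : ℂ) / D) ^ (w - n + 1) *
              ((q.2.2.1 : ℂ) * z + (q.2.2.2.2.1 : ℂ) / D) ^ (n + 1))
        else 0) +
      2 * (∑' q : ℤ × ℤ × ℤ × ℤ × ℤ × ℤ,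
        if q.1 * q.2.2.2.1 - q.2.1 * q.2.2.1 = 1 ∧ (N : ℤ) ∣ q.2.2.1 ∧
            0 < q.1 ∧ q.2.2.1 < 0 ∧ 0 < q.2.2.2.2.1 ∧ 0 < q.2.2.2.2.2 ∧
            (D : ℤ) = q.2.2.2.2.1 * q.1 - q.2.2.2.2.2 * q.2.2.1 ∧
            h = -(q.2.2.2.2.1 * q.2.1) + q.2.2.2.2.2 * q.2.2.2.1 then
          1 / (((q.1 : ℂ) * z + (q.2.2.2.2.2 : ℂ) / D) ^ (w - n + 1) *
              ((q.2.2.1 : ℂ) * z + (q.2.2.2.2.1 : ℂ) / D) ^ (n + 1))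
        else 0) := by
  have hD0 : 0 < D := by omega
  have hS : (Sset N D h).Finite := finS N D hD0 h
  have hT1 : (T1set N D h).Finite := finT1 N D hD0 h
  have hT2 : (T2set N D h).Finite := finT2 N D hD0 h
  refine ⟨hS, ?_⟩
  intro z hz
  have eq1 : (∑' p : ↥(Sset N D h),
      (fun p : ℤ × ℤ × ℤ × ℤ =>
        1 / (((p.1 : ℂ) * z + (p.1 : ℂ) * h / D + p.2.1) ^ (w - n + 1) *
            ((p.2.2.1 : ℂ) * z + (p.2.2.1 : ℂ) * h / D + p.2.2.2) ^ (n + 1))) ↑p)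
      = ∑ p ∈ hS.toFinset,
        (fun p : ℤ × ℤ × ℤ × ℤ =>
          1 / (((p.1 : ℂ) * z + (p.1 : ℂ) * h / D + p.2.1) ^ (w - n + 1) *
              ((p.2.2.1 : ℂ) * z + (p.2.2.1 : ℂ) * h / D + p.2.2.2) ^ (n + 1))) p :=
    tsum_finite_subtype (Sset N D h) hS
      (fun p : ℤ × ℤ × ℤ × ℤ =>
        1 / (((p.1 : ℂ) * z + (p.1 : ℂ) * h / D + p.2.1) ^ (w - n + 1) *
            ((p.2.2.1 : ℂ) * z + (p.2.2.1 : ℂ) * h / D + p.2.2.2) ^ (n + 1)))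
  have eqA : (∑' q : ℤ × ℤ × ℤ × ℤ × ℤ × ℤ,
      (fun q : ℤ × ℤ × ℤ × ℤ × ℤ × ℤ =>
        if q.1 * q.2.2.2.1 - q.2.1 * q.2.2.1 = 1 ∧ (N : ℤ) ∣ q.2.2.1 ∧
            0 < q.1 ∧ 0 < q.2.2.1 ∧ 0 < q.2.2.2.2.1 ∧ 0 < q.2.2.2.2.2 ∧
            (D : ℤ) = q.2.2.2.2.1 * q.1 + q.2.2.2.2.2 * q.2.2.1 ∧
            h = -(q.2.2.2.2.1 * q.2.1) - q.2.2.2.2.2 * q.2.2.2.1 then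
          1 / (((q.1 : ℂ) * z - (q.2.2.2.2.2 : ℂ) / D) ^ (w - n + 1) *
              ((q.2.2.1 : ℂ) * z + (q.2.2.2.2.1 : ℂ) / D) ^ (n + 1))
        else 0) q)
      = ∑ q ∈ hT1.toFinset,
        (fun q : ℤ × ℤ × ℤ × ℤ × ℤ × ℤ =>
          if q.1 * q.2.2.2.1 - q.2.1 * q.2.2.1 = 1 ∧ (N : ℤ) ∣ q.2.2.1 ∧
              0 < q.1 ∧ 0 < q.2.2.1 ∧ 0 < q.2.2.2.2.1 ∧ 0 < q.2.2.2.2.2 ∧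
              (D : ℤ) = q.2.2.2.2.1 * q.1 + q.2.2.2.2.2 * q.2.2.1 ∧
              h = -(q.2.2.2.2.1 * q.2.1) - q.2.2.2.2.2 * q.2.2.2.1 then
            1 / (((q.1 : ℂ) * z - (q.2.2.2.2.2 : ℂ) / D) ^ (w - n + 1) *
                ((q.2.2.1 : ℂ) * z + (q.2.2.2.2.1 : ℂ) / D) ^ (n + 1))
          else 0) q :=
    tsum_eq_sum (fun q hq => if_neg (fun hP => hq (hT1.mem_toFinset.mpr hP)))
  have eqB : (∑' q : ℤ × ℤ × ℤ × ℤ × ℤ × ℤ,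
      (fun q : ℤ × ℤ × ℤ × ℤ × ℤ × ℤ =>
        if q.1 * q.2.2.2.1 - q.2.1 * q.2.2.1 = 1 ∧ (N : ℤ) ∣ q.2.2.1 ∧
            0 < q.1 ∧ q.2.2.1 < 0 ∧ 0 < q.2.2.2.2.1 ∧ 0 < q.2.2.2.2.2 ∧
            (D : ℤ) = q.2.2.2.2.1 * q.1 - q.2.2.2.2.2 * q.2.2.1 ∧
            h = -(q.2.2.2.2.1 * q.2.1) + q.2.2.2.2.2 * q.2.2.2.1 then
          1 / (((q.1 : ℂ) * z + (q.2.2.2.2.2 : ℂ) / D) ^ (w - n + 1) *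
              ((q.2.2.1 : ℂ) * z + (q.2.2.2.2.1 : ℂ) / D) ^ (n + 1))
        else 0) q)
      = ∑ q ∈ hT2.toFinset,
        (fun q : ℤ × ℤ × ℤ × ℤ × ℤ × ℤ =>
          if q.1 * q.2.2.2.1 - q.2.1 * q.2.2.1 = 1 ∧ (N : ℤ) ∣ q.2.2.1 ∧
              0 < q.1 ∧ q.2.2.1 < 0 ∧ 0 < q.2.2.2.2.1 ∧ 0 < q.2.2.2.2.2 ∧
              (D : ℤ) = q.2.2.2.2.1 * q.1 - q.2.2.2.2.2 * q.2.2.1 ∧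
              h = -(q.2.2.2.2.1 * q.2.1) + q.2.2.2.2.2 * q.2.2.2.1 then
            1 / (((q.1 : ℂ) * z + (q.2.2.2.2.2 : ℂ) / D) ^ (w - n + 1) *
                ((q.2.2.1 : ℂ) * z + (q.2.2.2.2.1 : ℂ) / D) ^ (n + 1))
          else 0) q :=
    tsum_eq_sum (fun q hq => if_neg (fun hP => hq (hT2.mem_toFinset.mpr hP)))
  have eqMain := main_sum N D hD0 h
    (fun p : ℤ × ℤ × ℤ × ℤ =>
      1 / (((p.1 : ℂ) * z + (p.1 : ℂ) * h / D + p.2.1) ^ (w - n + 1) *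
          ((p.2.2.1 : ℂ) * z + (p.2.2.1 : ℂ) * h / D + p.2.2.2) ^ (n + 1)))
    (fun q : ℤ × ℤ × ℤ × ℤ × ℤ × ℤ =>
      if q.1 * q.2.2.2.1 - q.2.1 * q.2.2.1 = 1 ∧ (N : ℤ) ∣ q.2.2.1 ∧
          0 < q.1 ∧ 0 < q.2.2.1 ∧ 0 < q.2.2.2.2.1 ∧ 0 < q.2.2.2.2.2 ∧
          (D : ℤ) = q.2.2.2.2.1 * q.1 + q.2.2.2.2.2 * q.2.2.1 ∧
          h = -(q.2.2.2.2.1 * q.2.1) - q.2.2.2.2.2 * q.2.2.2.1 then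
        1 / (((q.1 : ℂ) * z - (q.2.2.2.2.2 : ℂ) / D) ^ (w - n + 1) *
            ((q.2.2.1 : ℂ) * z + (q.2.2.2.2.1 : ℂ) / D) ^ (n + 1))
      else 0)
    (fun q : ℤ × ℤ × ℤ × ℤ × ℤ × ℤ =>
      if q.1 * q.2.2.2.1 - q.2.1 * q.2.2.1 = 1 ∧ (N : ℤ) ∣ q.2.2.1 ∧
          0 < q.1 ∧ q.2.2.1 < 0 ∧ 0 < q.2.2.2.2.1 ∧ 0 < q.2.2.2.2.2 ∧
          (D : ℤ) = q.2.2.2.2.1 * q.1 - q.2.2.2.2.2 * q.2.2.1 ∧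
          h = -(q.2.2.2.2.1 * q.2.1) + q.2.2.2.2.2 * q.2.2.2.1 then
        1 / (((q.1 : ℂ) * z + (q.2.2.2.2.2 : ℂ) / D) ^ (w - n + 1) *
            ((q.2.2.1 : ℂ) * z + (q.2.2.2.2.1 : ℂ) / D) ^ (n + 1))
      else 0)
    hS.toFinset hT1.toFinset hT2.toFinset
    (fun p => hS.mem_toFinset) (fun q => hT1.mem_toFinset) (fun q => hT2.mem_toFinset)
    (fun a b c d => l_neg w n hwe hnw.le D h z a b c d)
    (by
      intro a b c d k l hq
      obtain ⟨hSm, ha, hc, hk, hl⟩ := T1_to_S N D hD0 h a b c d k l hq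
      have hq' : a * d - b * c = 1 ∧ (N:ℤ) ∣ c ∧ 0 < a ∧ 0 < c ∧ 0 < k ∧ 0 < l ∧
          (D:ℤ) = k * a + l * c ∧ h = -(k * b) - l * d := hq
      dsimp only
      rw [if_pos hq',
        l_cast1 D hD0 h a b l (by omega) z, l_cast2 D hD0 h c d k (by omega) z])
    (by
      intro a b c d k l hq
      obtain ⟨hSm, ha, hc, hk, hl⟩ := T2_to_S N D hD0 h a b c d k l hq
      have hq' : a * d - b * c = 1 ∧ (N:ℤ) ∣ c ∧ 0 < a ∧ c < 0 ∧ 0 < k ∧ 0 < l ∧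
          (D:ℤ) = k * a - l * c ∧ h = -(k * b) + l * d := hq
      dsimp only
      rw [if_pos hq',
        l_cast2 D hD0 h a b l (by omega) z, l_cast2 D hD0 h c d k (by omega) z])
  exact eq1.trans (eqMain.trans (by rw [eqA, eqB]))

end
end

section
/- Let a, b, c, d be real numbers with a·b·c·d < 0, let w ≥ 2 be even, let n be an integer with 0 < n < w, and set ñ = w − n. Then for every complex number X: ∫_{−i∞}^{i∞} (X−τ)^w / ((aτ+b)^{ñ+1}·(cτ+d)^{n+1}) dτ = ((−1)^n·2πi/(ad−bc)^{w+1})·C(w,n)·sgn(ab)·(aX+b)^n·(cX+d)^{ñ}. -/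
open MeasureTheory Complex Real Filter Topology Finset ComplexConjugate

/-!
Put `u = aτ + b`, `v = cτ + d`, `D = ad - bc` and `ρ = u / v`. Since
`D (X - τ) = (aX + b) v - (cX + d) u`, the binomial theorem writes the integrand as a
combination of the functions `ρ ^ k / v ^ 2`, `k ∈ ℤ`. Along `τ = iy`, for `k ≠ -1` this is
the derivative of `ρ ^ (k + 1) / ((k + 1) i D)`, which tends to `(a / c) ^ (k + 1)` at both
ends, so it integrates to zero. The surviving term `1 / (u v)` takes conjugate values at `±iy`,
so its integral equals that of its real part, a difference of two Lorentzians
`ab / (b² + a²y²) - cd / (d² + c²y²)` divided by `D`; as `ab` and `cd` have opposite signs,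
this integrates to `2π sgn(ab) / D`.
-/

theorem mul_sub_mul_ne_zero_of_mul_mul_mul_neg {R : Type*} [CommRing R] [LinearOrder R]
    [IsStrictOrderedRing R] {p q r s : R} (h : p * q * r * s < 0) : p * s - q * r ≠ 0 := by
  intro h0; nlinarith [sq_nonneg (p * s), sq_nonneg (q * r)]

theorem integral_mul_div_sq_add_mul_sq (p q : ℝ) :
    ∫ y : ℝ, p * q / (q ^ 2 + p ^ 2 * y ^ 2) = π * Real.sign (p * q) := by
  rcases eq_or_ne p 0 with rfl | hp
  · simp
  rcases eq_or_ne q 0 with rfl | hq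
  · simp
  have hpq : p * q ≠ 0 := mul_ne_zero hp hq
  have hk : p / q ≠ 0 := div_ne_zero hp hq
  calc ∫ y : ℝ, p * q / (q ^ 2 + p ^ 2 * y ^ 2)
      = ∫ y : ℝ, p / q * (1 + (p / q * y) ^ 2)⁻¹ := by
        congr 1 with y; field_simp
    _ = p / q * |(p / q)⁻¹| * π := by
        rw [integral_const_mul, Measure.integral_comp_mul_left (fun t => (1 + t ^ 2)⁻¹),
          integral_univ_inv_one_add_sq, smul_eq_mul, mul_assoc]
    _ = π * Real.sign (p * q) := by
        rw [abs_inv, inv_eq_one_div, ← mul_div_assoc, mul_one]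
        rcases hpq.lt_or_gt with h | h
        · have : p / q < 0 := by
            rw [show p / q = p * q / q ^ 2 by field_simp]; exact div_neg_of_neg_of_pos h (by positivity)
          rw [Real.sign_of_neg h, abs_of_neg this, div_neg, div_self hk]; ring
        · have : 0 < p / q := by
            rw [show p / q = p * q / q ^ 2 by field_simp]; positivity
          rw [Real.sign_of_pos h, abs_of_pos this, div_self hk]; ring

theorem integrable_inv_sq_add_mul_sq {p q : ℝ} (hp : p ≠ 0) (hq : q ≠ 0) :
    Integrable fun y : ℝ => (q ^ 2 + p ^ 2 * y ^ 2)⁻¹ := by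
  convert (integrable_inv_one_add_sq.comp_mul_left' (div_ne_zero hp hq)).const_mul (q ^ 2)⁻¹
    using 2 with y
  field_simp

theorem norm_zpow_le_pow_natAbs {𝕜 : Type*} [NormedDivisionRing 𝕜] {z : 𝕜} {K : ℝ}
    (h : ‖z‖ ≤ K) (h' : ‖z⁻¹‖ ≤ K) (i : ℤ) : ‖z ^ i‖ ≤ K ^ i.natAbs := by
  obtain ⟨k, rfl | rfl⟩ := Int.eq_nat_or_neg i
  · rw [zpow_natCast, norm_pow, Int.natAbs_natCast]; exact pow_le_pow_left₀ (norm_nonneg _) h _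
  · rw [zpow_neg, ← inv_zpow, zpow_natCast, norm_pow, Int.natAbs_neg, Int.natAbs_natCast]
    exact pow_le_pow_left₀ (norm_nonneg _) h' _

theorem integral_eq_ofReal_integral_re_of_conj {f : ℝ → ℂ} (hf : Integrable f)
    (hconj : ∀ y, f (-y) = conj (f y)) : ∫ y, f y = ↑(∫ y, (f y).re) := by
  have hreal : conj (∫ y, f y) = ∫ y, f y := by
    rw [← integral_conj, ← integral_neg_eq_self]; simp only [hconj, conj_conj]
  rw [← conj_eq_iff_re.1 hreal]
  exact congrArg ofReal (integral_re hf).symm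

theorem div_pow_mul_pow_eq_sum_zpow {K : Type*} [Field K] {t u v A B D : K} (hu : u ≠ 0)
    (hv : v ≠ 0) (hD : D ≠ 0) (h : A * v - B * u = D * t) (n m : ℕ) :
    t ^ (n + m) / (u ^ (m + 1) * v ^ (n + 1)) =
      ∑ k ∈ range (n + m + 1), D⁻¹ ^ (n + m) * ((-B) ^ k * A ^ (n + m - k) * (n + m).choose k) *
        ((u / v) ^ ((k : ℤ) - (m + 1 : ℕ)) / v ^ 2) := by
  have hρ : u / v ≠ 0 := div_ne_zero hu hv
  have hterm (k : ℕ) : (u / v) ^ ((k : ℤ) - (m + 1 : ℕ)) = (u / v) ^ k / (u / v) ^ (m + 1) := by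
    rw [zpow_sub₀ hρ, zpow_natCast, zpow_natCast]
  have hlin : -B * (u / v) + A = D * t / v := by
    field_simp; linear_combination h
  calc t ^ (n + m) / (u ^ (m + 1) * v ^ (n + 1))
      = D⁻¹ ^ (n + m) * (-B * (u / v) + A) ^ (n + m) / (u / v) ^ (m + 1) / v ^ 2 := by
        rw [hlin, div_pow, mul_pow, ← mul_div_assoc, ← mul_assoc, ← mul_pow, inv_mul_cancel₀ hD,
          one_pow, one_mul, div_pow u]
        field_simp
        ring
    _ = _ := by
        rw [add_pow, mul_sum, sum_div, sum_div]
        refine sum_congr rfl fun k _ ↦ ?_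
        rw [hterm]; ring

noncomputable def axisAffine (p q y : ℝ) : ℂ := p * (I * y) + q

@[fun_prop]
theorem continuous_axisAffine (p q : ℝ) : Continuous (axisAffine p q) := by
  unfold axisAffine; fun_prop

theorem normSq_axisAffine (p q y : ℝ) : normSq (axisAffine p q y) = q ^ 2 + p ^ 2 * y ^ 2 := by
  simp [axisAffine, normSq_apply]; ring

theorem hasDerivAt_axisAffine (p q y : ℝ) : HasDerivAt (axisAffine p q) (p * I) y := by
  have := ((((hasDerivAt_id (y : ℂ)).const_mul I).const_mul (p : ℂ)).add_const (q : ℂ)).comp_ofReal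
  rw [mul_one] at this
  exact this

theorem axisAffine_neg (p q y : ℝ) : axisAffine p q (-y) = conj (axisAffine p q y) := by
  simp [axisAffine]

section axisAffine

variable {p q r s : ℝ}

theorem axisAffine_ne_zero (hq : q ≠ 0) (y : ℝ) : axisAffine p q y ≠ 0 := by
  rw [← normSq_pos, normSq_axisAffine]; positivity

theorem integrable_inv_axisAffine_sq (hp : p ≠ 0) (hq : q ≠ 0) :
    Integrable fun y => (axisAffine p q y ^ 2)⁻¹ := by
  refine (integrable_norm_iff (by fun_prop)).1 ?_
  simpa [← normSq_eq_norm_sq, normSq_axisAffine] using integrable_inv_sq_add_mul_sq hp hq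

theorem norm_axisAffine_div_le (hr : r ≠ 0) (hs : s ≠ 0) (y : ℝ) :
    ‖axisAffine p q y / axisAffine r s y‖ ≤ √(q ^ 2 / s ^ 2 + p ^ 2 / r ^ 2) := by
  refine Real.le_sqrt_of_sq_le ?_
  rw [norm_div, div_pow, ← normSq_eq_norm_sq, ← normSq_eq_norm_sq, normSq_axisAffine,
    normSq_axisAffine, div_le_iff₀ (by positivity)]
  have : q ^ 2 + p ^ 2 * y ^ 2 + (q ^ 2 * r ^ 2 * y ^ 2 / s ^ 2 + p ^ 2 * s ^ 2 / r ^ 2)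
      = (q ^ 2 / s ^ 2 + p ^ 2 / r ^ 2) * (s ^ 2 + r ^ 2 * y ^ 2) := by
    field_simp; ring
  nlinarith [this, show 0 ≤ q ^ 2 * r ^ 2 * y ^ 2 / s ^ 2 + p ^ 2 * s ^ 2 / r ^ 2 by positivity]

theorem integrable_axisAffine_div_zpow_div_sq (hp : p ≠ 0) (hq : q ≠ 0) (hr : r ≠ 0)
    (hs : s ≠ 0) (i : ℤ) :
    Integrable fun y => (axisAffine p q y / axisAffine r s y) ^ i / axisAffine r s y ^ 2 := by
  set K := √(q ^ 2 / s ^ 2 + p ^ 2 / r ^ 2) + √(s ^ 2 / q ^ 2 + r ^ 2 / p ^ 2)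
  have hbound : ∀ y, ‖(axisAffine p q y / axisAffine r s y) ^ i‖ ≤ K ^ i.natAbs := fun y ↦
    norm_zpow_le_pow_natAbs
      ((norm_axisAffine_div_le hr hs y).trans (le_add_of_nonneg_right (Real.sqrt_nonneg _)))
      (by rw [inv_div]
          exact (norm_axisAffine_div_le hp hq y).trans (le_add_of_nonneg_left (Real.sqrt_nonneg _)))
      i
  simp_rw [div_eq_mul_inv _ (axisAffine r s _ ^ 2)]
  refine (integrable_inv_axisAffine_sq hr hs).bdd_mul ?_ (.of_forall hbound)
  exact ((continuous_axisAffine p q).div (continuous_axisAffine r s)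
    (axisAffine_ne_zero hs)).zpow₀ i (fun y ↦ .inl (div_ne_zero (axisAffine_ne_zero hq y)
      (axisAffine_ne_zero hs y))) |>.aestronglyMeasurable

theorem axisAffine_div_zpow_neg_one_div_sq (hs : s ≠ 0) (y : ℝ) :
    (axisAffine p q y / axisAffine r s y) ^ (-1 : ℤ) / axisAffine r s y ^ 2
      = (axisAffine p q y * axisAffine r s y)⁻¹ := by
  have := axisAffine_ne_zero (p := r) hs y
  rw [zpow_neg_one, inv_div]
  field_simp

theorem div_axisAffine_pow_mul_pow_eq_sum (hq : q ≠ 0) (hs : s ≠ 0) (hD : p * s - q * r ≠ 0)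
    (X : ℂ) (n m : ℕ) (y : ℝ) :
    (X - I * y) ^ (n + m) / (axisAffine p q y ^ (m + 1) * axisAffine r s y ^ (n + 1)) =
      ∑ k ∈ range (n + m + 1), (p * s - q * r : ℂ)⁻¹ ^ (n + m) *
        ((-(r * X + s)) ^ k * (p * X + q) ^ (n + m - k) * (n + m).choose k) *
        ((axisAffine p q y / axisAffine r s y) ^ ((k : ℤ) - (m + 1 : ℕ)) / axisAffine r s y ^ 2) :=
  div_pow_mul_pow_eq_sum_zpow (axisAffine_ne_zero hq y) (axisAffine_ne_zero hs y)
    (by exact_mod_cast hD) (by simp only [axisAffine]; ring) n m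

theorem hasDerivAt_axisAffine_div_zpow (hq : q ≠ 0) (hs : s ≠ 0) (i : ℤ) (y : ℝ) :
    HasDerivAt (fun y => (axisAffine p q y / axisAffine r s y) ^ (i + 1))
      ((i + 1) * (I * (p * s - q * r)) *
        ((axisAffine p q y / axisAffine r s y) ^ i / axisAffine r s y ^ 2)) y := by
  have hu := axisAffine_ne_zero (p := p) hq y
  have hv := axisAffine_ne_zero (p := r) hs y
  have hratio := (hasDerivAt_axisAffine p q y).div (hasDerivAt_axisAffine r s y) hv
  have hnum : p * I * axisAffine r s y - axisAffine p q y * (r * I) = I * (p * s - q * r) := by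
    simp only [axisAffine]; ring
  refine ((hasDerivAt_zpow (i + 1) _ (.inl (div_ne_zero hu hv))).comp y hratio).congr_deriv ?_
  rw [hnum, Int.cast_add, Int.cast_one, add_sub_cancel_right]
  ring

theorem tendsto_axisAffine_div_cocompact (hr : r ≠ 0) (hs : s ≠ 0) :
    Tendsto (fun y => axisAffine p q y / axisAffine r s y) (cocompact ℝ) (𝓝 (p / r)) := by
  have hnorm : Tendsto (fun y => ‖axisAffine r s y‖) (cocompact ℝ) atTop := by
    refine tendsto_atTop_mono (fun y ↦ ?_)
      ((tendsto_norm_cocompact_atTop (E := ℝ)).const_mul_atTop (abs_pos.2 hr))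
    rw [Complex.norm_def, normSq_axisAffine, Real.norm_eq_abs, ← abs_mul, ← Real.sqrt_sq_eq_abs]
    exact Real.sqrt_le_sqrt (by nlinarith [sq_nonneg s])
  have hinv : Tendsto (fun y => (axisAffine r s y)⁻¹) (cocompact ℝ) (𝓝 0) := by
    rw [tendsto_zero_iff_norm_tendsto_zero]
    exact hnorm.inv_tendsto_atTop.congr fun y ↦ (norm_inv _).symm
  have hsplit : ∀ y, axisAffine p q y / axisAffine r s y
      = p / r + (q - p * s / r) * (axisAffine r s y)⁻¹ := by
    intro y
    field_simp [axisAffine_ne_zero hs y, ofReal_ne_zero.2 hr]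
    simp only [axisAffine]
    ring
  simp_rw [hsplit]
  simpa using (hinv.const_mul ((q : ℂ) - p * s / r)).const_add ((p : ℂ) / r)

theorem integral_axisAffine_div_zpow_div_sq_eq_zero (hp : p ≠ 0) (hq : q ≠ 0) (hr : r ≠ 0)
    (hs : s ≠ 0) (hD : p * s - q * r ≠ 0) {i : ℤ} (hi : i ≠ -1) :
    ∫ y, (axisAffine p q y / axisAffine r s y) ^ i / axisAffine r s y ^ 2 = 0 := by
  have hlim : Tendsto (fun y => (axisAffine p q y / axisAffine r s y) ^ (i + 1)) (cocompact ℝ)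
      (𝓝 ((p / r : ℂ) ^ (i + 1))) :=
    ((continuousAt_zpow₀ _ _ (.inl (by simp [hp, hr]))).tendsto).comp
      (tendsto_axisAffine_div_cocompact hr hs)
  have hFTC := integral_of_hasDerivAt_of_tendsto (hasDerivAt_axisAffine_div_zpow hq hs i)
    ((integrable_axisAffine_div_zpow_div_sq hp hq hr hs i).const_mul _)
    (hlim.mono_left atBot_le_cocompact) (hlim.mono_left atTop_le_cocompact)
  rw [sub_self, integral_const_mul, mul_eq_zero] at hFTC
  refine hFTC.resolve_left (mul_ne_zero ?_ (mul_ne_zero I_ne_zero ?_))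
  · exact_mod_cast (show i + 1 ≠ 0 by omega)
  · exact_mod_cast hD

theorem re_inv_axisAffine_mul (hq : q ≠ 0) (hs : s ≠ 0) (hD : p * s - q * r ≠ 0) (y : ℝ) :
    ((axisAffine p q y * axisAffine r s y)⁻¹).re
      = (p * q / (q ^ 2 + p ^ 2 * y ^ 2) - r * s / (s ^ 2 + r ^ 2 * y ^ 2)) / (p * s - q * r) := by
  have hu := axisAffine_ne_zero (p := p) hq y
  have hv := axisAffine_ne_zero (p := r) hs y
  have hpartial : (axisAffine p q y * axisAffine r s y)⁻¹
      = ((p * s - q * r : ℝ) : ℂ)⁻¹ * (p * (axisAffine p q y)⁻¹ - r * (axisAffine r s y)⁻¹) := by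
    have hD' : (p * s - q * r : ℂ) ≠ 0 := by exact_mod_cast hD
    push_cast
    field_simp
    simp only [axisAffine]; ring
  rw [hpartial, ← ofReal_inv, re_ofReal_mul, sub_re, re_ofReal_mul, re_ofReal_mul, inv_re,
    inv_re, normSq_axisAffine, normSq_axisAffine]
  simp only [axisAffine]
  simp
  ring

theorem integral_inv_axisAffine_mul (h : p * q * r * s < 0) :
    ∫ y, (axisAffine p q y * axisAffine r s y)⁻¹
      = 2 * π * Real.sign (p * q) / (p * s - q * r) := by
  obtain ⟨⟨⟨hp, hq⟩, hr⟩, hs⟩ : ((p ≠ 0 ∧ q ≠ 0) ∧ r ≠ 0) ∧ s ≠ 0 := by simpa [not_or] using h.ne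
  have hint : Integrable fun y => (axisAffine p q y * axisAffine r s y)⁻¹ :=
    (integrable_axisAffine_div_zpow_div_sq hp hq hr hs (-1)).congr
      (.of_forall (axisAffine_div_zpow_neg_one_div_sq hs))
  have hsign : Real.sign (r * s) = - Real.sign (p * q) := by
    rcases (mul_ne_zero hp hq).lt_or_gt with hpq | hpq
    · rw [Real.sign_of_neg hpq, Real.sign_of_pos (by nlinarith)]; ring
    · rw [Real.sign_of_pos hpq, Real.sign_of_neg (by nlinarith)]
  have hlor : ∀ {k l : ℝ}, k ≠ 0 → l ≠ 0 →
      Integrable fun y : ℝ => k * l / (l ^ 2 + k ^ 2 * y ^ 2) := fun hk hl ↦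
    (integrable_inv_sq_add_mul_sq hk hl).const_mul _
  rw [integral_eq_ofReal_integral_re_of_conj hint (fun y ↦ by simp [axisAffine_neg]),
    integral_congr_ae (.of_forall
      (re_inv_axisAffine_mul hq hs (mul_sub_mul_ne_zero_of_mul_mul_mul_neg h))), integral_div,
    integral_sub (hlor hp hq) (hlor hr hs),
    integral_mul_div_sq_add_mul_sq, integral_mul_div_sq_add_mul_sq, hsign]
  push_cast
  ring

end axisAffine

theorem integral_imaginary_axis_rational_fn_general (a b c d : ℝ) (habcd : a * b * c * d < 0)
    (w : ℕ) (hwe : Even w) (n : ℕ) (hnw : n < w) (X : ℂ) :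
    (Complex.I * ∫ y : ℝ, (X - Complex.I * y) ^ w /
        (((a : ℂ) * (Complex.I * y) + b) ^ (w - n + 1) *
          ((c : ℂ) * (Complex.I * y) + d) ^ (n + 1))) =
      (-1) ^ n * 2 * Real.pi * Complex.I / ((a : ℂ) * d - b * c) ^ (w + 1) *
        (w.choose n) * Real.sign (a * b) *
        ((a : ℂ) * X + b) ^ n * ((c : ℂ) * X + d) ^ (w - n) := by
  obtain ⟨⟨⟨ha, hb⟩, hc⟩, hd⟩ : ((a ≠ 0 ∧ b ≠ 0) ∧ c ≠ 0) ∧ d ≠ 0 := by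
    simpa [not_or] using habcd.ne
  have hD := mul_sub_mul_ne_zero_of_mul_mul_mul_neg habcd
  obtain ⟨m, rfl⟩ : ∃ m, w = n + m := ⟨w - n, by omega⟩
  change I * ∫ y : ℝ, (X - I * y) ^ (n + m) /
    (axisAffine a b y ^ (n + m - n + 1) * axisAffine c d y ^ (n + 1)) = _
  simp only [Nat.add_sub_cancel_left]
  rw [integral_congr_ae (.of_forall (div_axisAffine_pow_mul_pow_eq_sum hb hd hD X n m)),
    integral_finsetSum _ fun k _ ↦ (integrable_axisAffine_div_zpow_div_sq ha hb hc hd _).const_mul _]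
  simp only [integral_const_mul]
  rw [sum_eq_single_of_mem m (by simp) fun k _ hk ↦ by
      rw [integral_axisAffine_div_zpow_div_sq_eq_zero ha hb hc hd hD (by omega), mul_zero],
    show (m : ℤ) - (m + 1 : ℕ) = -1 by omega,
    integral_congr_ae (.of_forall (axisAffine_div_zpow_neg_one_div_sq hd)),
    integral_inv_axisAffine_mul habcd, Nat.choose_symm_add, neg_pow,
    neg_one_pow_congr (Nat.even_add.1 (by rwa [add_comm]) : Even m ↔ Even n),
    Nat.add_sub_cancel, inv_pow]
  field_simp
  ring

/-- for real `a, b, c, d` with `abcd < 0`, even `w ≥ 2` and `0 < n < w`,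
`∫_{−i∞}^{i∞} (X−τ)^w/((aτ+b)^{ñ+1}(cτ+d)^{n+1}) dτ
  = ((−1)^n·2πi/(ad−bc)^{w+1})·C(w,n)·sgn(ab)·(aX+b)^n·(cX+d)^{ñ}`,
the contour integral being along the imaginary axis `τ = iy`. -/
theorem integral_imaginary_axis_rational_fn (a b c d : ℝ) (habcd : a * b * c * d < 0)
    (w : ℕ) (hw : 2 ≤ w) (hwe : Even w) (n : ℕ) (hn0 : 0 < n) (hnw : n < w) (X : ℂ) :
    (Complex.I * ∫ y : ℝ, (X - Complex.I * y) ^ w /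
        (((a : ℂ) * (Complex.I * y) + b) ^ (w - n + 1) *
          ((c : ℂ) * (Complex.I * y) + d) ^ (n + 1))) =
      (-1) ^ n * 2 * Real.pi * Complex.I / ((a : ℂ) * d - b * c) ^ (w + 1) *
        (w.choose n) * Real.sign (a * b) *
        ((a : ℂ) * X + b) ^ n * ((c : ℂ) * X + d) ^ (w - n) :=
  integral_imaginary_axis_rational_fn_general a b c d habcd w hwe n hnw X
end

section
/- Let N ≥ 1, let w ≥ 2 be even, let n be an integer with 0 < n < w, and set ñ = w − n. Consider the sum T = Σ 1/(a^{ñ+1}·c^{n+1}) taken over all pairs of nonzero integers (a, c) with gcd(a,c) = 1 and N ∣ c. If n is even then T = 0. If n is odd then T = (4·ζ(n+1)·ζ(ñ+1))/(ζ(w+2)·N^{n+1})·Π_{p ∣ N} (1−p^{−(ñ+1)})/(1−p^{−(w+2)}), where the product runs over the prime divisors p of N and ζ denotes the Riemann zeta function. -/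
/-!
Write the coprimality condition as `∑_{d ∣ gcd(a, c)} μ(d)` and exchange the (absolutely
convergent) sums: the sum becomes `Z(ñ+1) Z(n+1) ∑_d μ(d) d^{-(ñ+1)} lcm(d, N)^{-(n+1)}`, where
`Z(k) = ∑_{a ∈ ℤ, a ≠ 0} a^{-k}` vanishes for odd `k` and equals `2 ζ(k)` for even `k`. The
remaining series is `N^{-(n+1)} ∑_d μ(d) gcd(d, N)^{n+1} d^{-(w+2)}`, whose summand is
multiplicative with Euler factor `1 - p^{-(w+2)}` at `p ∤ N` and `1 - p^{-(ñ+1)}` at `p ∣ N`;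
dividing by the Euler product of `ζ(w+2)` leaves the finite product over `p ∣ N`.
-/

open scoped ArithmeticFunction.Moebius

theorem sum_divisors_moebius {R : Type*} [Ring R] (n : ℕ) :
    ∑ d ∈ n.divisors, (μ d : R) = if n = 1 then 1 else 0 := by
  rw [← ArithmeticFunction.one_apply (R := R), ← ArithmeticFunction.coe_moebius_mul_coe_zeta,
    ArithmeticFunction.coe_mul_zeta_apply]
  simp

section CoprimePairs

variable {d : ℕ}

theorem mem_range_mul_of_dvd_gcd {q : ℤ × ℤ} (h : d ∣ Int.gcd q.1 q.2) :
    q ∈ Set.range fun q' : ℤ × ℤ => ((d : ℤ) * q'.1, (d : ℤ) * q'.2) := by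
  obtain ⟨a, ha⟩ := (Int.natCast_dvd_natCast.2 h).trans (Int.gcd_dvd_left q.1 q.2)
  obtain ⟨c, hc⟩ := (Int.natCast_dvd_natCast.2 h).trans (Int.gcd_dvd_right q.1 q.2)
  exact ⟨(a, c), by simp [← ha, ← hc]⟩

theorem mul_pair_injective (hd : d ≠ 0) :
    Function.Injective fun q : ℤ × ℤ => ((d : ℤ) * q.1, (d : ℤ) * q.2) := by
  intro q q' h
  simp only [Prod.mk.injEq, mul_right_inj' (Int.natCast_ne_zero.2 hd)] at h
  exact Prod.ext h.1 h.2

variable {E : Type*} [AddCommMonoid E] [TopologicalSpace E]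

theorem tsum_ite_dvd_gcd (hd : d ≠ 0) (F : ℤ × ℤ → E) :
    ∑' q : ℤ × ℤ, (if d ∣ Int.gcd q.1 q.2 then F q else 0) =
      ∑' q : ℤ × ℤ, F (d * q.1, d * q.2) := by
  rw [← (mul_pair_injective hd).tsum_eq]
  · simp [Int.gcd_mul_left]
  · intro q hq
    by_contra h
    exact hq (if_neg (mt mem_range_mul_of_dvd_gcd h))

theorem summable_ite_dvd_gcd_iff (hd : d ≠ 0) (F : ℤ × ℤ → E) :
    Summable (fun q : ℤ × ℤ => if d ∣ Int.gcd q.1 q.2 then F q else 0) ↔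
      Summable fun q : ℤ × ℤ => F (d * q.1, d * q.2) := by
  rw [← (mul_pair_injective hd).summable_iff]
  · simp [Function.comp_def, Int.gcd_mul_left]
  · intro q hq
    exact if_neg (mt mem_range_mul_of_dvd_gcd hq)

end CoprimePairs

section MoebiusInversion

theorem ite_coprime_eq_tsum_moebius {E : Type*} [AddCommGroup E] [Module ℝ E]
    [TopologicalSpace E] {f : ℤ × ℤ → E} (hf0 : f 0 = 0) (q : ℤ × ℤ) :
    (if Int.gcd q.1 q.2 = 1 then f q else 0) =
      ∑' d : ℕ, if d ∣ Int.gcd q.1 q.2 then (μ d : ℝ) • f q else 0 := by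
  rcases eq_or_ne q 0 with rfl | hq
  · simp [hf0]
  have hg : Int.gcd q.1 q.2 ≠ 0 := by
    rw [Ne, Int.gcd_eq_zero_iff]
    exact fun h => hq (Prod.ext h.1 h.2)
  rw [tsum_eq_sum (s := (Int.gcd q.1 q.2).divisors)
      fun d hd => if_neg fun h => hd (Nat.mem_divisors.2 ⟨h, hg⟩),
    Finset.sum_congr rfl fun d hd => if_pos (Nat.mem_divisors.1 hd).1, ← Finset.sum_smul,
    sum_divisors_moebius]
  split_ifs <;> simp

variable {E : Type*} [NormedAddCommGroup E] [NormedSpace ℝ E] [CompleteSpace E]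

theorem summable_ite_dvd_gcd_moebius_smul {f : ℤ × ℤ → E} (hf0 : f 0 = 0)
    (hf : Summable fun p : ℕ × (ℤ × ℤ) => ‖f (p.1 * p.2.1, p.1 * p.2.2)‖) :
    Summable fun p : ℕ × (ℤ × ℤ) =>
      if p.1 ∣ Int.gcd p.2.1 p.2.2 then (μ p.1 : ℝ) • f p.2 else 0 := by
  set B : ℕ × (ℤ × ℤ) → ℝ := fun p => if p.1 ∣ Int.gcd p.2.1 p.2.2 then ‖f p.2‖ else 0
  have hB0 : ∀ q, B (0, q) = 0 := by
    intro q
    simp only [B, zero_dvd_iff, Int.gcd_eq_zero_iff]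
    split_ifs with h
    · rw [show q = 0 from Prod.ext h.1 h.2, hf0, norm_zero]
    · rfl
  refine Summable.of_norm_bounded (g := B) ?_ fun p => ?_
  · refine (summable_prod_of_nonneg fun p => by positivity).2 ⟨fun d => ?_, ?_⟩
    · rcases eq_or_ne d 0 with rfl | hd
      · simpa only [hB0] using summable_zero
      · exact (summable_ite_dvd_gcd_iff hd _).2 (hf.prod_factor d)
    · refine hf.prod.congr fun d => ?_
      rcases eq_or_ne d 0 with rfl | hd
      · simp [hB0]
      · exact (tsum_ite_dvd_gcd hd fun q => ‖f q‖).symm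
  · simp only [B]
    split_ifs
    · exact (norm_smul_le _ _).trans (mul_le_of_le_one_left (norm_nonneg _) (by
        rw [Real.norm_eq_abs]; exact_mod_cast ArithmeticFunction.abs_moebius_le_one))
    · simp

theorem tsum_coprime_eq_tsum_moebius {f : ℤ × ℤ → E} (hf0 : f 0 = 0)
    (hf : Summable fun p : ℕ × (ℤ × ℤ) => ‖f (p.1 * p.2.1, p.1 * p.2.2)‖) :
    ∑' q : ℤ × ℤ, (if Int.gcd q.1 q.2 = 1 then f q else 0) =
      ∑' d : ℕ, (μ d : ℝ) • ∑' q : ℤ × ℤ, f (d * q.1, d * q.2) := by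
  have slice : ∀ d : ℕ, ∑' q : ℤ × ℤ, (if d ∣ Int.gcd q.1 q.2 then (μ d : ℝ) • f q else 0) =
      (μ d : ℝ) • ∑' q : ℤ × ℤ, f (d * q.1, d * q.2) := by
    intro d
    rcases eq_or_ne d 0 with rfl | hd
    · simp
    · rw [tsum_ite_dvd_gcd hd, tsum_const_smul'']
  rw [tsum_congr (ite_coprime_eq_tsum_moebius hf0), ← tsum_congr slice]
  exact Summable.tsum_comm (f := fun (d : ℕ) (q : ℤ × ℤ) =>
    if d ∣ Int.gcd q.1 q.2 then (μ d : ℝ) • f q else 0)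
    (summable_ite_dvd_gcd_moebius_smul hf0 hf)

end MoebiusInversion

theorem tsum_int_eq_zero_of_odd {f : ℤ → ℝ} (hf : f.Odd) : ∑' n, f n = 0 := by
  have h : ∑' n, -f n = ∑' n, f n := (tsum_congr hf).symm.trans ((Equiv.neg ℤ).tsum_eq f)
  rw [tsum_neg] at h
  linarith

theorem tsum_int_pow_inv_of_odd {k : ℕ} (hk : Odd k) : ∑' n : ℤ, ((n : ℝ) ^ k)⁻¹ = 0 :=
  tsum_int_eq_zero_of_odd fun n => by push_cast; rw [hk.neg_pow, inv_neg]

theorem tsum_int_pow_inv_of_even {k : ℕ} (hk : Even k) (hk1 : 1 < k) :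
    ∑' n : ℤ, ((n : ℝ) ^ k)⁻¹ = 2 * ∑' n : ℕ, ((n : ℝ) ^ k)⁻¹ := by
  have hs : Summable fun n : ℕ => ((n : ℝ) ^ k)⁻¹ := Real.summable_nat_pow_inv.2 hk1
  have hs' : Summable fun n : ℕ => (((-n : ℤ) : ℝ) ^ k)⁻¹ := by
    simpa [hk.neg_pow] using hs
  rw [Summable.tsum_of_nat_of_neg (f := fun n : ℤ => ((n : ℝ) ^ k)⁻¹) (by simpa using hs) hs']
  simp [hk.neg_pow, zero_pow (by omega : k ≠ 0), two_mul]

theorem tsum_int_ite_dvd {E : Type*} [AddCommMonoid E] [TopologicalSpace E] {d : ℤ}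
    (hd : d ≠ 0) (g : ℤ → E) :
    ∑' c, (if d ∣ c then g c else 0) = ∑' c, g (d * c) := by
  rw [← (mul_right_injective₀ hd).tsum_eq]
  · simp
  · intro c hc
    by_contra h
    exact hc (if_neg fun ⟨c', hc'⟩ => h ⟨c', hc'.symm⟩)

theorem tsum_int_ite_dvd_pow_inv (m : ℕ) {k : ℕ} (hk : k ≠ 0) :
    ∑' c : ℤ, (if (m : ℤ) ∣ c then ((c : ℝ) ^ k)⁻¹ else 0) =
      ((m : ℝ) ^ k)⁻¹ * ∑' c : ℤ, ((c : ℝ) ^ k)⁻¹ := by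
  rcases eq_or_ne m 0 with rfl | hm
  · simp [zero_pow hk]
  · rw [tsum_int_ite_dvd (by exact_mod_cast hm), ← tsum_mul_left]
    refine tsum_congr fun c => ?_
    push_cast
    rw [mul_pow, mul_inv]

theorem norm_mul_pow_inv (d : ℕ) (a : ℤ) (k : ℕ) :
    ‖(((d * a : ℤ) : ℝ) ^ k)⁻¹‖ = ((d : ℝ) ^ k)⁻¹ * ‖((a : ℝ) ^ k)⁻¹‖ := by
  push_cast
  rw [mul_pow, mul_inv, norm_mul, norm_inv, norm_pow, Real.norm_natCast]

theorem summable_norm_int_pow_inv {k : ℕ} (hk : 1 < k) :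
    Summable fun a : ℤ => ‖((a : ℝ) ^ k)⁻¹‖ := by
  simpa using (Real.summable_one_div_int_pow.2 hk).norm

theorem tsum_mul_pair_pow_inv (N : ℕ) {d A C : ℕ} (hd : d ≠ 0) (hA : 1 < A) (hC : 1 < C) :
    ∑' q : ℤ × ℤ, (((d * q.1 : ℤ) : ℝ) ^ A)⁻¹ *
        (if (N : ℤ) ∣ d * q.2 then (((d * q.2 : ℤ) : ℝ) ^ C)⁻¹ else 0) =
      ((d : ℝ) ^ A)⁻¹ * (∑' a : ℤ, ((a : ℝ) ^ A)⁻¹) *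
        (((d.lcm N : ℝ) ^ C)⁻¹ * ∑' c : ℤ, ((c : ℝ) ^ C)⁻¹) := by
  have hd' : (d : ℤ) ≠ 0 := by exact_mod_cast hd
  have hsA : Summable fun a : ℤ => ‖(((d * a : ℤ) : ℝ) ^ A)⁻¹‖ := by
    simp only [norm_mul_pow_inv]
    exact (summable_norm_int_pow_inv hA).mul_left _
  have hsC : Summable fun c : ℤ =>
      ‖if (N : ℤ) ∣ d * c then (((d * c : ℤ) : ℝ) ^ C)⁻¹ else 0‖ := by
    refine Summable.of_nonneg_of_le (fun _ => norm_nonneg _) (fun c => ?_)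
      ((summable_norm_int_pow_inv hC).mul_left ((d : ℝ) ^ C)⁻¹)
    split_ifs
    · exact (norm_mul_pow_inv d c C).le
    · rw [norm_zero]
      positivity
  rw [← tsum_mul_tsum_of_summable_norm hsA hsC,
    ← tsum_int_ite_dvd hd' fun a : ℤ => ((a : ℝ) ^ A)⁻¹, tsum_int_ite_dvd_pow_inv d (by omega),
    ← tsum_int_ite_dvd hd' fun c : ℤ => if (N : ℤ) ∣ c then ((c : ℝ) ^ C)⁻¹ else 0,
    ← tsum_int_ite_dvd_pow_inv (d.lcm N) (by omega)]
  congr 2 with c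
  simp only [← ite_and, Int.natCast_dvd, Nat.lcm_dvd_iff]

theorem summable_norm_pow_inv_mul_ite_dvd (N : ℕ) {A C : ℕ} (hA : 1 < A) (hC : 1 < C) :
    Summable fun p : ℕ × (ℤ × ℤ) => ‖(((p.1 * p.2.1 : ℤ) : ℝ) ^ A)⁻¹ *
      (if (N : ℤ) ∣ p.1 * p.2.2 then (((p.1 * p.2.2 : ℤ) : ℝ) ^ C)⁻¹ else 0)‖ := by
  refine Summable.of_nonneg_of_le (fun _ => norm_nonneg _) (fun p => ?_)
    ((Real.summable_nat_pow_inv.2 (by omega : 1 < A + C)).mul_of_nonneg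
      ((summable_norm_int_pow_inv hA).mul_of_nonneg (summable_norm_int_pow_inv hC)
        (fun _ => norm_nonneg _) (fun _ => norm_nonneg _))
      (fun _ => by positivity) (fun _ => by positivity))
  obtain ⟨d, a, c⟩ := p
  calc _ ≤ ‖(((d * a : ℤ) : ℝ) ^ A)⁻¹‖ * ‖(((d * c : ℤ) : ℝ) ^ C)⁻¹‖ := by
        rw [norm_mul]
        gcongr
        split_ifs
        · rfl
        · rw [norm_zero]
          positivity
    _ = ((d : ℝ) ^ (A + C))⁻¹ * (‖((a : ℝ) ^ A)⁻¹‖ * ‖((c : ℝ) ^ C)⁻¹‖) := by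
        rw [norm_mul_pow_inv, norm_mul_pow_inv, pow_add, mul_inv]
        ring

theorem tsum_coprime_pow_inv (N : ℕ) {A C : ℕ} (hA : 1 < A) (hC : 1 < C) :
    ∑' q : ℤ × ℤ, (if q.1 ≠ 0 ∧ q.2 ≠ 0 ∧ Int.gcd q.1 q.2 = 1 ∧ (N : ℤ) ∣ q.2 then
        ((q.1 : ℝ) ^ A * (q.2 : ℝ) ^ C)⁻¹ else 0) =
      (∑' a : ℤ, ((a : ℝ) ^ A)⁻¹) * (∑' c : ℤ, ((c : ℝ) ^ C)⁻¹) *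
        ∑' d : ℕ, (μ d : ℝ) * (((d : ℝ) ^ A)⁻¹ * ((d.lcm N : ℝ) ^ C)⁻¹) := by
  set f : ℤ × ℤ → ℝ := fun q =>
    ((q.1 : ℝ) ^ A)⁻¹ * if (N : ℤ) ∣ q.2 then ((q.2 : ℝ) ^ C)⁻¹ else 0
  -- `(0 : ℝ)⁻¹ = 0` absorbs the conditions `q.1 ≠ 0` and `q.2 ≠ 0` into `f`.
  have hterm : ∀ q : ℤ × ℤ, (if q.1 ≠ 0 ∧ q.2 ≠ 0 ∧ Int.gcd q.1 q.2 = 1 ∧ (N : ℤ) ∣ q.2 then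
      ((q.1 : ℝ) ^ A * (q.2 : ℝ) ^ C)⁻¹ else 0) = if Int.gcd q.1 q.2 = 1 then f q else 0 := by
    rintro ⟨a, c⟩
    rcases eq_or_ne a 0 with rfl | ha
    · simp [f, zero_pow (by omega : A ≠ 0)]
    rcases eq_or_ne c 0 with rfl | hc
    · simp [f, zero_pow (by omega : C ≠ 0)]
    by_cases hg : Int.gcd a c = 1 <;> by_cases hN : (N : ℤ) ∣ c <;>
      simp [f, ha, hc, hg, hN, mul_comm]
  have hf0 : f 0 = 0 := by simp [f, zero_pow (by omega : A ≠ 0)]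
  rw [tsum_congr hterm,
    tsum_coprime_eq_tsum_moebius hf0 (summable_norm_pow_inv_mul_ite_dvd N hA hC),
    ← tsum_mul_left]
  refine tsum_congr fun d => ?_
  rcases eq_or_ne d 0 with rfl | hd
  · simp
  rw [smul_eq_mul, tsum_mul_pair_pow_inv N hd hA hC]
  ring

theorem hasProd_one_add_of_squarefree_support {R : Type*} [NormedCommRing R] [CompleteSpace R]
    {h : ℕ → R} (h1 : h 1 = 1) (hmul : ∀ {m n : ℕ}, m.Coprime n → h (m * n) = h m * h n)
    (hsum : Summable (‖h ·‖)) (hsq : ∀ n, ¬Squarefree n → h n = 0) :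
    HasProd (fun p : Nat.Primes => 1 + h p) (∑' n, h n) := by
  have h0 : h 0 = 0 := hsq 0 not_squarefree_zero
  convert EulerProduct.eulerProduct_hasProd h1 hmul hsum h0 using 2 with p
  have hpow : ∀ e ∉ Finset.range 2, h ((p : ℕ) ^ e) = 0 := by
    intro e he
    rw [Finset.mem_range, not_lt] at he
    refine hsq _ fun hsqf => ?_
    have := ((Nat.squarefree_pow_iff p.prop.ne_one (by omega)).1 hsqf).2
    omega
  rw [tsum_eq_sum hpow, Finset.sum_range_succ, Finset.sum_range_one, pow_zero, pow_one, h1]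

theorem one_sub_inv_prime_pow_ne_zero {p k : ℕ} (hp : p.Prime) (hk : k ≠ 0) :
    1 - ((p : ℂ) ^ k)⁻¹ ≠ 0 := by
  rw [sub_ne_zero, ne_comm, inv_ne_one]
  exact_mod_cast (Nat.one_lt_pow hk hp.one_lt).ne'

theorem one_add_moebius_gcd_pow_div_pow_prime (N A C : ℕ) {p : ℕ} (hp : p.Prime) :
    1 + (μ p : ℂ) * ((N.gcd p : ℂ) ^ C / (p : ℂ) ^ (A + C)) =
      if p ∣ N then 1 - ((p : ℂ) ^ A)⁻¹ else 1 - ((p : ℂ) ^ (A + C))⁻¹ := by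
  have hp0 : (p : ℂ) ≠ 0 := by exact_mod_cast hp.ne_zero
  rw [ArithmeticFunction.moebius_apply_prime hp]
  split_ifs with hdvd
  · rw [Nat.gcd_eq_right hdvd, pow_add]
    field_simp
    ring
  · rw [(Nat.coprime_comm.1 ((Nat.Prime.coprime_iff_not_dvd hp).2 hdvd)).gcd_eq_one]
    simp [div_eq_mul_inv]
    ring

theorem HasProd.eq_prod_primeFactors {M : Type*} [CommMonoid M] [TopologicalSpace M]
    [T2Space M] {f : ℕ → M} {a : M} (hf : HasProd (fun p : Nat.Primes => f p) a) {N : ℕ}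
    (hN : N ≠ 0) (h1 : ∀ p, p.Prime → ¬p ∣ N → f p = 1) :
    a = ∏ p ∈ N.primeFactors, f p := by
  rw [← hf.tprod_eq, tprod_eq_prod (s := N.primeFactors.preimage (fun p : Nat.Primes => (p : ℕ))
    Nat.Primes.coe_nat_injective.injOn)]
  · exact Finset.prod_preimage (fun p : Nat.Primes => (p : ℕ)) N.primeFactors _ f
      fun p hp hp' => absurd ⟨⟨p, Nat.prime_of_mem_primeFactors hp⟩, rfl⟩ hp'
  · intro p hp
    exact h1 p p.prop fun hdvd => hp (Finset.mem_preimage.2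
      (Nat.mem_primeFactors.2 ⟨p.prop, hdvd, hN⟩))

theorem summable_norm_moebius_gcd_pow_div_pow (N : ℕ) {A : ℕ} (hA : 1 < A) (C : ℕ) :
    Summable fun d : ℕ => ‖(μ d : ℂ) * ((N.gcd d : ℂ) ^ C / (d : ℂ) ^ (A + C))‖ := by
  refine Summable.of_nonneg_of_le (fun _ => norm_nonneg _) (fun d => ?_)
    (Real.summable_nat_pow_inv.2 hA)
  rcases eq_or_ne d 0 with rfl | hd
  · simp [zero_pow (by omega : A + C ≠ 0)]
  have hgcd : (N.gcd d : ℝ) ≤ d := by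
    exact_mod_cast Nat.le_of_dvd (Nat.pos_of_ne_zero hd) (Nat.gcd_dvd_right N d)
  calc _ = |(μ d : ℝ)| * ((N.gcd d : ℝ) ^ C / (d : ℝ) ^ (A + C)) := by
        simp [Complex.norm_intCast]
    _ ≤ 1 * ((d : ℝ) ^ C / (d : ℝ) ^ (A + C)) := by
        gcongr
        exact_mod_cast ArithmeticFunction.abs_moebius_le_one
    _ = ((d : ℝ) ^ A)⁻¹ := by
        rw [pow_add]
        field_simp

theorem tsum_moebius_gcd_pow_div_pow {N A : ℕ} (hN : N ≠ 0) (hA : 1 < A) (C : ℕ) :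
    ∑' d : ℕ, (μ d : ℂ) * ((N.gcd d : ℂ) ^ C / (d : ℂ) ^ (A + C)) =
      (riemannZeta (A + C))⁻¹ *
        ∏ p ∈ N.primeFactors, (1 - ((p : ℂ) ^ A)⁻¹) / (1 - ((p : ℂ) ^ (A + C))⁻¹) := by
  set h : ℕ → ℂ := fun d => (μ d : ℂ) * ((N.gcd d : ℂ) ^ C / (d : ℂ) ^ (A + C))
  have hmul : ∀ {m n : ℕ}, m.Coprime n → h (m * n) = h m * h n := by
    intro m n hmn
    simp only [h, ArithmeticFunction.isMultiplicative_moebius.map_mul_of_coprime hmn,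
      Nat.Coprime.gcd_mul N hmn]
    push_cast
    ring
  have hsq : ∀ n, ¬Squarefree n → h n = 0 := fun n hn => by
    simp [h, ArithmeticFunction.moebius_eq_zero_of_not_squarefree hn]
  have hre : 1 < ((A : ℂ) + C).re := by
    rw [← Nat.cast_add, Complex.natCast_re]
    exact_mod_cast (by omega : 1 < A + C)
  have hζ : HasProd (fun p : Nat.Primes => (1 - ((p : ℂ) ^ (A + C))⁻¹)⁻¹)
      (riemannZeta (A + C)) := by
    convert riemannZeta_eulerProduct_hasProd hre using 3 with p
    rw [← Nat.cast_add, Complex.cpow_neg, Complex.cpow_natCast]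
  have key := ((hasProd_one_add_of_squarefree_support (by simp [h]) hmul
    (summable_norm_moebius_gcd_pow_div_pow N hA C) hsq).mul hζ).eq_prod_primeFactors
    (f := fun p : ℕ => (1 + h p) * (1 - ((p : ℂ) ^ (A + C))⁻¹)⁻¹) hN fun p hp hpN => by
      rw [one_add_moebius_gcd_pow_div_pow_prime N A C hp, if_neg hpN,
        mul_inv_cancel₀ (one_sub_inv_prime_pow_ne_zero hp (by omega))]
  rw [Finset.prod_congr rfl fun p hp => by
    rw [one_add_moebius_gcd_pow_div_pow_prime N A C (Nat.prime_of_mem_primeFactors hp),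
      if_pos (Nat.dvd_of_mem_primeFactors hp), ← div_eq_mul_inv]] at key
  rw [← key, mul_comm, mul_inv_cancel_right₀ (riemannZeta_ne_zero_of_one_lt_re hre)]

theorem tsum_moebius_mul_lcm_pow_inv {N A : ℕ} (hN : N ≠ 0) (hA : 1 < A) (C : ℕ) :
    ∑' d : ℕ, (μ d : ℂ) * (((d : ℂ) ^ A)⁻¹ * ((d.lcm N : ℂ) ^ C)⁻¹) =
      ((N : ℂ) ^ C)⁻¹ * ((riemannZeta (A + C))⁻¹ *
        ∏ p ∈ N.primeFactors, (1 - ((p : ℂ) ^ A)⁻¹) / (1 - ((p : ℂ) ^ (A + C))⁻¹)) := by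
  rw [← tsum_moebius_gcd_pow_div_pow hN hA C, ← tsum_mul_left]
  refine tsum_congr fun d => ?_
  rcases eq_or_ne d 0 with rfl | hd
  · simp [zero_pow (by omega : A ≠ 0)]
  have hg : (N.gcd d : ℂ) ≠ 0 := by
    exact_mod_cast (Nat.gcd_pos_of_pos_left d (Nat.pos_of_ne_zero hN)).ne'
  have hl : (d.lcm N : ℂ) = d * N / N.gcd d := by
    rw [eq_div_iff hg, Nat.gcd_comm]
    exact_mod_cast (mul_comm _ _).trans (Nat.gcd_mul_lcm d N)
  have hd' : (d : ℂ) ≠ 0 := by exact_mod_cast hd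
  have hN' : (N : ℂ) ≠ 0 := by exact_mod_cast hN
  rw [hl, div_pow, inv_div, mul_pow]
  field_simp
  ring

theorem tsum_nat_pow_inv_eq_riemannZeta {k : ℕ} (hk : 1 < k) :
    ∑' m : ℕ, ((m : ℂ) ^ k)⁻¹ = riemannZeta k := by
  simp [zeta_nat_eq_tsum_of_gt_one hk, one_div]

theorem coprime_pair_zeta_sum_general (N w n : ℕ) (hN : 1 ≤ N) (hwe : Even w)
    (hn0 : 0 < n) (hnw : n < w) :
    (Even n →
      (∑' p : ℤ × ℤ, if p.1 ≠ 0 ∧ p.2 ≠ 0 ∧ Int.gcd p.1 p.2 = 1 ∧ (N : ℤ) ∣ p.2 then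
        ((p.1 : ℝ) ^ (w - n + 1) * (p.2 : ℝ) ^ (n + 1))⁻¹ else 0) = 0) ∧
    (Odd n →
      ((∑' p : ℤ × ℤ, if p.1 ≠ 0 ∧ p.2 ≠ 0 ∧ Int.gcd p.1 p.2 = 1 ∧ (N : ℤ) ∣ p.2 then
        ((p.1 : ℝ) ^ (w - n + 1) * (p.2 : ℝ) ^ (n + 1))⁻¹ else 0 : ℝ) : ℂ) =
        4 * riemannZeta (n + 1) * riemannZeta ((w : ℂ) - n + 1) /
          (riemannZeta (w + 2) * (N : ℂ) ^ (n + 1)) *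
        ∏ p ∈ N.primeFactors,
          (1 - (p : ℂ) ^ (-((w : ℤ) - n) - 1)) / (1 - (p : ℂ) ^ (-(w : ℤ) - 2))) := by
  have hA : 1 < w - n + 1 := by omega
  have hC : 1 < n + 1 := by omega
  rw [tsum_coprime_pow_inv N hA hC]
  refine ⟨fun hn => ?_, fun hn => ?_⟩
  · rw [tsum_int_pow_inv_of_odd ((Nat.even_sub hnw.le).2 (iff_of_true hwe hn)).add_one,
      zero_mul, zero_mul]
  rw [tsum_int_pow_inv_of_even (Nat.Even.sub_odd hnw.le hwe hn).add_one hA,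
    tsum_int_pow_inv_of_even hn.add_one hC]
  push_cast
  rw [tsum_nat_pow_inv_eq_riemannZeta hA, tsum_nat_pow_inv_eq_riemannZeta hC,
    tsum_moebius_mul_lcm_pow_inv (by omega) hA]
  have hsub : ((w - n : ℕ) : ℤ) = w - n := Nat.cast_sub hnw.le
  have hAC : ((w - n + 1 : ℕ) : ℂ) + ((n + 1 : ℕ) : ℂ) = w + 2 := by
    push_cast [Nat.cast_sub hnw.le]
    ring
  have hzpow : ∀ (p k : ℕ) (z : ℤ), z = -k → (p : ℂ) ^ z = ((p : ℂ) ^ k)⁻¹ := by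
    rintro p k z rfl
    rw [zpow_neg, zpow_natCast]
  rw [hAC]
  simp_rw [hzpow _ (w - n + 1) (-((w : ℤ) - n) - 1) (by push_cast [hsub]; ring),
    hzpow _ (w - n + 1 + (n + 1)) (-(w : ℤ) - 2) (by push_cast [hsub]; ring)]
  push_cast [Nat.cast_sub hnw.le]
  ring

/-- the value of `Σ 1/(a^{ñ+1} c^{n+1})` over pairs of nonzero coprime
integers `(a, c)` with `N ∣ c`: it vanishes for even `n`, and for odd `n` it equals
`4 ζ(n+1) ζ(ñ+1) / (ζ(w+2) N^{n+1}) · Π_{p ∣ N} (1−p^{−(ñ+1)})/(1−p^{−(w+2)})`. -/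
theorem coprime_pair_zeta_sum (N w n : ℕ) (hN : 1 ≤ N) (hw : 2 ≤ w) (hwe : Even w)
    (hn0 : 0 < n) (hnw : n < w) :
    (Even n →
      (∑' p : ℤ × ℤ, if p.1 ≠ 0 ∧ p.2 ≠ 0 ∧ Int.gcd p.1 p.2 = 1 ∧ (N : ℤ) ∣ p.2 then
        ((p.1 : ℝ) ^ (w - n + 1) * (p.2 : ℝ) ^ (n + 1))⁻¹ else 0) = 0) ∧
    (Odd n →
      ((∑' p : ℤ × ℤ, if p.1 ≠ 0 ∧ p.2 ≠ 0 ∧ Int.gcd p.1 p.2 = 1 ∧ (N : ℤ) ∣ p.2 then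
        ((p.1 : ℝ) ^ (w - n + 1) * (p.2 : ℝ) ^ (n + 1))⁻¹ else 0 : ℝ) : ℂ) =
        4 * riemannZeta (n + 1) * riemannZeta ((w : ℂ) - n + 1) /
          (riemannZeta (w + 2) * (N : ℂ) ^ (n + 1)) *
        ∏ p ∈ N.primeFactors,
          (1 - (p : ℂ) ^ (-((w : ℤ) - n) - 1)) / (1 - (p : ℂ) ^ (-(w : ℤ) - 2))) :=
  coprime_pair_zeta_sum_general N w n hN hwe hn0 hnw
end

section
/- For every integer w ≥ 1: ∫_{−∞}^{∞} ∫_{−1}^{1} 1/(1−ixt)^{w+2} dt dx = 2π/(w+1). -/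
/-!
The inner integral is elementary: for `x ≠ 0` it equals `G_{w+1}(x) / (w+1)`, where
`G_n(x) = ((1 - ix)⁻ⁿ - (1 + ix)⁻ⁿ) / (ix)`. (Fubini is not available: the absolute integrand
integrates in `x` to a multiple of `1/|t|`.) Now `G_1(x) = 2 / (1 + x²)` has integral `2π`, and
`G_{n+1} - G_n = (1 - ix)⁻⁽ⁿ⁺¹⁾ + (1 + ix)⁻⁽ⁿ⁺¹⁾`, whose integral vanishes for `n ≥ 1` because it
is the derivative of a function tending to `0` at `±∞`. Hence `∫ G_n = 2π` for every `n ≥ 1`.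
-/

open MeasureTheory Complex Real Filter Topology

theorem one_sub_I_mul_ofReal_ne_zero (x : ℝ) : 1 - I * x ≠ 0 := by
  intro h; simpa using congrArg re h

theorem one_add_I_mul_ofReal_ne_zero (x : ℝ) : 1 + I * x ≠ 0 := by
  simpa using one_sub_I_mul_ofReal_ne_zero (-x)

theorem one_le_norm_one_sub_I_mul_ofReal (x : ℝ) : 1 ≤ ‖1 - I * x‖ := by
  simpa using abs_re_le_norm (1 - I * x)

theorem abs_le_norm_one_sub_I_mul_ofReal (x : ℝ) : |x| ≤ ‖1 - I * x‖ := by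
  simpa using abs_im_le_norm (1 - I * x)

theorem sq_norm_one_sub_I_mul_ofReal (x : ℝ) : ‖1 - I * x‖ ^ 2 = 1 + x ^ 2 := by
  rw [show 1 - I * x = (1 : ℝ) + (-x : ℝ) * I by push_cast; ring, norm_add_mul_I,
    sq_sqrt (by positivity)]
  ring

theorem hasDerivAt_inv_one_sub_mul_ofReal_pow (c : ℂ) (n : ℕ) {t : ℝ} (ht : 1 - c * t ≠ 0) :
    HasDerivAt (fun t : ℝ => ((1 - c * t) ^ n)⁻¹) (n * c * ((1 - c * t) ^ (n + 1))⁻¹) t := by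
  have h : HasDerivAt (fun s : ℂ => 1 - c * s) (-c) t := by
    simpa using ((hasDerivAt_id (t : ℂ)).const_mul c).const_sub 1
  refine ((h.pow n).inv (pow_ne_zero n ht)).comp_ofReal.congr_deriv ?_
  rcases n with _ | n
  · simp
  · simp only [Pi.pow_apply, Nat.add_sub_cancel]
    field_simp
    ring

theorem integral_Icc_inv_one_sub_mul_ofReal_pow (c : ℂ) (hc : c ≠ 0) (n : ℕ)
    (h : ∀ t ∈ Set.Icc (-1 : ℝ) 1, 1 - c * t ≠ 0) :
    ∫ t in Set.Icc (-1 : ℝ) 1, ((1 - c * t) ^ (n + 2))⁻¹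
      = (((1 - c) ^ (n + 1))⁻¹ - ((1 + c) ^ (n + 1))⁻¹) / (c * (n + 1)) := by
  have hI : Set.uIcc (-1 : ℝ) 1 = Set.Icc (-1) 1 := Set.uIcc_of_le (by norm_num)
  have hderiv : ∀ t ∈ Set.uIcc (-1 : ℝ) 1, HasDerivAt
      (fun t : ℝ => ((1 - c * t) ^ (n + 1))⁻¹ / (c * (n + 1))) ((1 - c * t) ^ (n + 2))⁻¹ t := by
    intro t ht
    refine ((hasDerivAt_inv_one_sub_mul_ofReal_pow c (n + 1) (h t (hI ▸ ht))).div_const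
      (c * (n + 1))).congr_deriv ?_
    push_cast
    field_simp
  have hcont : ContinuousOn (fun t : ℝ => ((1 - c * t) ^ (n + 2))⁻¹) (Set.uIcc (-1) 1) :=
    ContinuousOn.inv₀ (by fun_prop) fun t ht => pow_ne_zero _ (h t (hI ▸ ht))
  rw [integral_Icc_eq_integral_Ioc, ← intervalIntegral.integral_of_le (by norm_num),
    intervalIntegral.integral_eq_sub_of_hasDerivAt hderiv hcont.intervalIntegrable, sub_div]
  push_cast
  ring_nf

theorem integrable_inv_one_sub_I_mul_ofReal_pow (k : ℕ) :
    Integrable fun x : ℝ => ((1 - I * x) ^ (k + 2))⁻¹ := by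
  refine integrable_inv_one_add_sq.mono'
    ((Continuous.inv₀ (by fun_prop) fun x => pow_ne_zero _ (one_sub_I_mul_ofReal_ne_zero x)
      ).aestronglyMeasurable) (ae_of_all _ fun x => ?_)
  rw [norm_inv, norm_pow, ← sq_norm_one_sub_I_mul_ofReal]
  exact inv_anti₀ (pow_pos (one_pos.trans_le (one_le_norm_one_sub_I_mul_ofReal x)) 2)
    (pow_le_pow_right₀ (one_le_norm_one_sub_I_mul_ofReal x) (by omega))

theorem tendsto_inv_one_sub_I_mul_ofReal_pow_cocompact (k : ℕ) :
    Tendsto (fun x : ℝ => ((1 - I * x) ^ (k + 1))⁻¹) (cocompact ℝ) (𝓝 0) := by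
  rw [tendsto_zero_iff_norm_tendsto_zero]
  simp only [norm_inv, norm_pow]
  exact tendsto_inv_atTop_zero.comp <| (tendsto_pow_atTop k.succ_ne_zero).comp <|
    tendsto_atTop_mono abs_le_norm_one_sub_I_mul_ofReal tendsto_norm_cocompact_atTop

theorem integral_inv_one_sub_I_mul_ofReal_pow (k : ℕ) :
    ∫ x : ℝ, ((1 - I * x) ^ (k + 2))⁻¹ = 0 := by
  have hderiv : ∀ x : ℝ, HasDerivAt (fun x : ℝ => ((1 - I * x) ^ (k + 1))⁻¹ / (I * (k + 1)))
      ((1 - I * x) ^ (k + 2))⁻¹ x := by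
    intro x
    refine ((hasDerivAt_inv_one_sub_mul_ofReal_pow I (k + 1)
      (one_sub_I_mul_ofReal_ne_zero x)).div_const (I * (k + 1))).congr_deriv ?_
    push_cast
    field_simp
  have hlim := (tendsto_inv_one_sub_I_mul_ofReal_pow_cocompact k).div_const (I * (k + 1))
  rw [zero_div] at hlim
  simpa using integral_of_hasDerivAt_of_tendsto hderiv (integrable_inv_one_sub_I_mul_ofReal_pow k)
    (hlim.mono_left atBot_le_cocompact) (hlim.mono_left atTop_le_cocompact)

theorem integrable_inv_one_add_I_mul_ofReal_pow (k : ℕ) :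
    Integrable fun x : ℝ => ((1 + I * x) ^ (k + 2))⁻¹ := by
  convert (integrable_inv_one_sub_I_mul_ofReal_pow k).comp_neg using 3
  push_cast
  ring

theorem integral_inv_one_add_I_mul_ofReal_pow (k : ℕ) :
    ∫ x : ℝ, ((1 + I * x) ^ (k + 2))⁻¹ = 0 := by
  rw [← integral_inv_one_sub_I_mul_ofReal_pow k, ← integral_neg_eq_self]
  push_cast
  ring_nf

-- At `x = 0` this is the junk value `0`; the identities below hold for `x ≠ 0`, i.e. a.e.
noncomputable def invPowDiffQuotient (n : ℕ) (x : ℝ) : ℂ :=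
  (((1 - I * x) ^ n)⁻¹ - ((1 + I * x) ^ n)⁻¹) / (I * x)

theorem invPowDiffQuotient_one {x : ℝ} (hx : x ≠ 0) :
    invPowDiffQuotient 1 x = ((2 * (1 + x ^ 2)⁻¹ : ℝ) : ℂ) := by
  have h₁ := one_sub_I_mul_ofReal_ne_zero x
  have h₂ := one_add_I_mul_ofReal_ne_zero x
  have hx' : (x : ℂ) ≠ 0 := ofReal_ne_zero.mpr hx
  have h₃ : (1 + x ^ 2 : ℂ) = (1 - I * x) * (1 + I * x) := by
    linear_combination (x : ℂ) ^ 2 * I_sq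
  unfold invPowDiffQuotient
  push_cast
  rw [h₃]
  field_simp
  ring

theorem invPowDiffQuotient_succ (n : ℕ) {x : ℝ} (hx : x ≠ 0) :
    invPowDiffQuotient (n + 1) x
      = invPowDiffQuotient n x + ((1 - I * x) ^ (n + 1))⁻¹ + ((1 + I * x) ^ (n + 1))⁻¹ := by
  have h₁ := one_sub_I_mul_ofReal_ne_zero x
  have h₂ := one_add_I_mul_ofReal_ne_zero x
  have hx' : (x : ℂ) ≠ 0 := ofReal_ne_zero.mpr hx
  unfold invPowDiffQuotient
  field_simp
  ring

theorem integrable_invPowDiffQuotient_and_integral_eq (n : ℕ) :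
    Integrable (invPowDiffQuotient (n + 1)) ∧ ∫ x, invPowDiffQuotient (n + 1) x = 2 * π := by
  induction n with
  | zero =>
    have h : invPowDiffQuotient 1 =ᵐ[volume] fun x => ((2 * (1 + x ^ 2)⁻¹ : ℝ) : ℂ) := by
      filter_upwards [Measure.ae_ne volume 0] with x hx using invPowDiffQuotient_one hx
    refine ⟨(integrable_inv_one_add_sq.const_mul 2).ofReal.congr h.symm, ?_⟩
    rw [integral_congr_ae h, integral_complex_ofReal, integral_const_mul,
      integral_univ_inv_one_add_sq]
    norm_num
  | succ n ih =>
    set r := fun x : ℝ => ((1 - I * x) ^ (n + 2))⁻¹ + ((1 + I * x) ^ (n + 2))⁻¹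
    have hr : Integrable r := (integrable_inv_one_sub_I_mul_ofReal_pow n).add
      (integrable_inv_one_add_I_mul_ofReal_pow n)
    have h : invPowDiffQuotient (n + 2) =ᵐ[volume] invPowDiffQuotient (n + 1) + r := by
      filter_upwards [Measure.ae_ne volume 0] with x hx
      rw [invPowDiffQuotient_succ (n + 1) hx, add_assoc]
      rfl
    refine ⟨(ih.1.add hr).congr h.symm, ?_⟩
    rw [integral_congr_ae h, Pi.add_def, integral_add ih.1 hr, ih.2, integral_add
      (integrable_inv_one_sub_I_mul_ofReal_pow n) (integrable_inv_one_add_I_mul_ofReal_pow n),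
      integral_inv_one_sub_I_mul_ofReal_pow, integral_inv_one_add_I_mul_ofReal_pow, add_zero,
      add_zero]

theorem integral_integral_one_div_one_sub_I_mul_pow_general (w : ℕ) :
    ∫ x : ℝ, ∫ t in Set.Icc (-1 : ℝ) 1,
      1 / (1 - Complex.I * x * t) ^ (w + 2) = 2 * Real.pi / (w + 1) := by
  have h : (fun x : ℝ => ∫ t in Set.Icc (-1 : ℝ) 1, 1 / (1 - I * x * t) ^ (w + 2))
      =ᵐ[volume] fun x => invPowDiffQuotient (w + 1) x / (w + 1) := by
    filter_upwards [Measure.ae_ne volume 0] with x hx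
    have hc : I * x ≠ 0 := mul_ne_zero I_ne_zero (ofReal_ne_zero.mpr hx)
    simp_rw [one_div]
    rw [integral_Icc_inv_one_sub_mul_ofReal_pow (I * x) hc w fun t _ => by
      simpa [mul_assoc] using one_sub_I_mul_ofReal_ne_zero (x * t), invPowDiffQuotient, div_div]
  rw [integral_congr_ae h, integral_div, (integrable_invPowDiffQuotient_and_integral_eq w).2]

/-- For every integer `w ≥ 1`,
`∫_{−∞}^{∞} ∫_{−1}^{1} 1/(1−ixt)^{w+2} dt dx = 2π/(w+1)`. -/
theorem integral_integral_one_div_one_sub_I_mul_pow (w : ℕ) (hw : 1 ≤ w) :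
    ∫ x : ℝ, ∫ t in Set.Icc (-1 : ℝ) 1,
      1 / (1 - Complex.I * x * t) ^ (w + 2) = 2 * Real.pi / (w + 1) :=
  integral_integral_one_div_one_sub_I_mul_pow_general w
end

section
/- Let N ≥ 1, let w ≥ 2 be even, let m, n be integers with 0 ≤ m ≤ w and 1 ≤ n ≤ w−1, and set m̃ = w−m, ñ = w−n. Let D > 1 and let h be an integer with gcd(Nh, D) = 1, and let v be an integer with N·h·v ≡ −1 (mod D). Then r_{m,h/D}(R_n) = (−1)^{n+m}·N^{ñ−m}·D^{m̃−m}·r_{m̃,v/D}(R_{ñ}), where for a cusp form f of weight w+2 on Γ₀(N), r_{m,h/D}(f) = ∫₀^{i∞} f(z + h/D)·z^m dz, and R_n(z) = c_n^{−1}·Σ_{(a b; c d) ∈ Γ₀(N)} 1/((az+b)^{ñ+1}(cz+d)^{n+1}) with c_n = (−1)^n·4πi·(2i)^{−w−1}·C(w,n). -/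
/-!
Substituting `y = 1/(N D² t)` in the period integral turns the point `iy + h/D` into
`W (it + v/D)`, where `W = [[N h, -k], [N D, -N v]]` with `N h v + 1 = D k` has determinant `N`.
At `W ζ` each term of `R_n` indexed by `γ ∈ Γ₀(N)` equals, up to the factor
`(-1)^(n+1) N^(ñ+1) (D u)^(w+2)` with `u = it`, the term of `R_ñ` at `ζ` indexed by `F γ W`,
where `F = [[0, -1/N], [1, 0]]`; the map `γ ↦ F γ W` permutes `Γ₀(N)`, and `c_ñ = c_n` because
`w` is even.
Neither step needs convergence: reindexing a `tsum` along a bijection and changing variables in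
a Bochner integral are valid unconditionally.
-/

open MeasureTheory Complex Real

noncomputable section

/-- The constant `c_n = (−1)^n·4πi·(2i)^{−w−1}·C(w,n)`. -/
def cconst (w n : ℕ) : ℂ :=
  (-1) ^ n * 4 * Real.pi * Complex.I * (2 * Complex.I) ^ (-(w : ℤ) - 1) * (w.choose n)

/-- `R_n(z) = c_n^{−1} Σ_{(a b; c d) ∈ Γ₀(N)} 1/((az+b)^{ñ+1}(cz+d)^{n+1})`. -/
def Rq (N w n : ℕ) (z : ℂ) : ℂ :=
  (cconst w n)⁻¹ * ∑' p : {p : ℤ × ℤ × ℤ × ℤ //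
      p.1 * p.2.2.2 - p.2.1 * p.2.2.1 = 1 ∧ (N : ℤ) ∣ p.2.2.1},
    1 / (((p.1.1 : ℂ) * z + (p.1.2.1 : ℂ)) ^ (w - n + 1) *
        ((p.1.2.2.1 : ℂ) * z + (p.1.2.2.2 : ℂ)) ^ (n + 1))

/-- The shifted period `r_{m,α/D}(f) = ∫₀^{i∞} f(z + α/D)·z^m dz` along the positive
imaginary axis. -/
def rshift (D : ℕ) (m : ℕ) (α : ℤ) (f : ℂ → ℂ) : ℂ :=
  Complex.I * ∫ y in Set.Ioi (0 : ℝ),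
    f (Complex.I * y + (α : ℂ) / D) * (Complex.I * y) ^ m

open Set in
theorem integral_Ioi_comp_inv_mul {E : Type*} [NormedAddCommGroup E] [NormedSpace ℝ E]
    (f : ℝ → E) {K : ℝ} (hK : 0 < K) :
    ∫ t in Ioi 0, (K * t ^ 2)⁻¹ • f (K * t)⁻¹ = ∫ y in Ioi 0, f y := by
  have hinj : InjOn (fun t : ℝ ↦ (K * t)⁻¹) (Ioi 0) := fun x _ y _ hxy ↦
    mul_left_cancel₀ hK.ne' (inv_injective hxy)
  have himage : (fun t : ℝ ↦ (K * t)⁻¹) '' Ioi 0 = Ioi 0 := by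
    refine (image_subset_iff.2 fun t ht ↦ ?_).antisymm fun y hy ↦ ⟨(K * y)⁻¹, ?_, ?_⟩
    · exact inv_pos.2 (mul_pos hK ht)
    · exact inv_pos.2 (mul_pos hK hy)
    · simp only [mul_inv_rev, inv_inv]
      field_simp
  have hderiv : ∀ t ∈ Ioi (0 : ℝ), HasDerivWithinAt (fun t ↦ (K * t)⁻¹)
      (-(K * t ^ 2)⁻¹) (Ioi 0) t := by
    intro t ht
    simp only [mul_inv, ← mul_neg]
    exact ((hasDerivAt_inv ht.ne').const_mul K⁻¹).hasDerivWithinAt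
  conv_rhs =>
    rw [← himage, integral_image_eq_integral_abs_deriv_smul measurableSet_Ioi hderiv hinj]
  refine setIntegral_congr_fun measurableSet_Ioi fun t ht ↦ ?_
  rw [abs_neg, abs_of_pos (inv_pos.2 (mul_pos hK (pow_pos ht 2)))]

theorem cconst_symm {w n : ℕ} (hw : Even w) (hn : n ≤ w) : cconst w (w - n) = cconst w n := by
  have hsign : (-1 : ℂ) ^ (w - n) = (-1) ^ n :=
    neg_one_pow_congr <| by rw [← Nat.even_add, Nat.sub_add_cancel hn]; exact hw
  rw [cconst, cconst, Nat.choose_symm hn, hsign]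

abbrev IsGamma0 (N : ℕ) (p : ℤ × ℤ × ℤ × ℤ) : Prop :=
  p.1 * p.2.2.2 - p.2.1 * p.2.2.1 = 1 ∧ (N : ℤ) ∣ p.2.2.1

abbrev Gamma0Tuple (N : ℕ) := {p : ℤ × ℤ × ℤ × ℤ // IsGamma0 N p}

def rqTerm (α β : ℕ) (z : ℂ) : ℤ × ℤ × ℤ × ℤ → ℂ
  | (a, b, c, d) => 1 / ((a * z + b) ^ α * (c * z + d) ^ β)

theorem Rq_eq_tsum_rqTerm (N w n : ℕ) (z : ℂ) :
    Rq N w n z = (cconst w n)⁻¹ * ∑' p : Gamma0Tuple N, rqTerm (w - n + 1) (n + 1) z p := rfl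

section Fricke

variable (N D : ℕ) (h v k : ℤ)

/-- `γ ↦ F γ W` with `F = [[0, -1/N], [1, 0]]` and `W = [[N h, -k], [N D, -N v]]`. -/
def frickeConj : ℤ × ℤ × ℤ × ℤ → ℤ × ℤ × ℤ × ℤ
  | (a, b, c, d) =>
    (-(c * h + d * D), c / N * k + d * v, N * (a * h + b * D), -(a * k + b * (N * v)))

def frickeConjInv : ℤ × ℤ × ℤ × ℤ → ℤ × ℤ × ℤ × ℤ
  | (a, b, c, d) =>
    (-(v * c + D * d), k * (c / N) + h * d, N * (v * a + D * b), -(k * a + N * h * b))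

variable {N D h v k}

theorem isGamma0_frickeConj (hN : N ≠ 0) (hk : N * h * v + 1 = D * k) {p : ℤ × ℤ × ℤ × ℤ}
    (hp : IsGamma0 N p) : IsGamma0 N (frickeConj N D h v k p) := by
  obtain ⟨a, b, c, d⟩ := p
  obtain ⟨hdet, c, rfl⟩ := hp
  refine ⟨?_, dvd_mul_right _ _⟩
  simp only [frickeConj, Int.mul_ediv_cancel_left _ (Int.natCast_ne_zero.2 hN)]
  linear_combination (D * k - N * h * v) * hdet - hk

theorem isGamma0_frickeConjInv (hN : N ≠ 0) (hk : N * h * v + 1 = D * k) {p : ℤ × ℤ × ℤ × ℤ}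
    (hp : IsGamma0 N p) : IsGamma0 N (frickeConjInv N D h v k p) := by
  obtain ⟨a, b, c, d⟩ := p
  obtain ⟨hdet, c, rfl⟩ := hp
  refine ⟨?_, dvd_mul_right _ _⟩
  simp only [frickeConjInv, Int.mul_ediv_cancel_left _ (Int.natCast_ne_zero.2 hN)]
  linear_combination (D * k - N * h * v) * hdet - hk

theorem frickeConjInv_frickeConj (hN : N ≠ 0) (hk : N * h * v + 1 = D * k)
    {p : ℤ × ℤ × ℤ × ℤ} (hp : (N : ℤ) ∣ p.2.2.1) :
    frickeConjInv N D h v k (frickeConj N D h v k p) = p := by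
  obtain ⟨a, b, c, d⟩ := p
  obtain ⟨c, rfl⟩ := hp
  simp only [frickeConj, frickeConjInv, Int.mul_ediv_cancel_left _ (Int.natCast_ne_zero.2 hN),
    Prod.mk.injEq]
  exact ⟨by linear_combination -a * hk, by linear_combination -b * hk,
    by linear_combination -N * c * hk, by linear_combination -d * hk⟩

theorem frickeConj_frickeConjInv (hN : N ≠ 0) (hk : N * h * v + 1 = D * k)
    {p : ℤ × ℤ × ℤ × ℤ} (hp : (N : ℤ) ∣ p.2.2.1) :
    frickeConj N D h v k (frickeConjInv N D h v k p) = p := by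
  obtain ⟨a, b, c, d⟩ := p
  obtain ⟨c, rfl⟩ := hp
  simp only [frickeConj, frickeConjInv, Int.mul_ediv_cancel_left _ (Int.natCast_ne_zero.2 hN),
    Prod.mk.injEq]
  exact ⟨by linear_combination -a * hk, by linear_combination -b * hk,
    by linear_combination -N * c * hk, by linear_combination -d * hk⟩

def frickeEquiv (hN : N ≠ 0) (hk : N * h * v + 1 = D * k) : Gamma0Tuple N ≃ Gamma0Tuple N where
  toFun p := ⟨frickeConj N D h v k p, isGamma0_frickeConj hN hk p.2⟩
  invFun p := ⟨frickeConjInv N D h v k p, isGamma0_frickeConjInv hN hk p.2⟩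
  left_inv p := Subtype.ext (frickeConjInv_frickeConj hN hk p.2.2)
  right_inv p := Subtype.ext (frickeConj_frickeConjInv hN hk p.2.2)

end Fricke

theorem linear_at_fricke_point {N D h v k u : ℂ} (hN : N ≠ 0) (hD : D ≠ 0) (hu : u ≠ 0)
    (hk : N * h * v + 1 = D * k) (a b : ℂ) :
    (a * (h / D - 1 / (N * D ^ 2 * u)) + b) * (N * D * u) =
      N * (a * h + b * D) * (u + v / D) - (a * k + b * (N * v)) := by
  field_simp
  linear_combination -a * hk

theorem rqTerm_at_fricke_point (α β : ℕ) {N D : ℕ} {h v k : ℤ} (hN : N ≠ 0) (hD : D ≠ 0)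
    (hk : N * h * v + 1 = D * k) {u : ℂ} (hu : u ≠ 0) {p : ℤ × ℤ × ℤ × ℤ}
    (hp : (N : ℤ) ∣ p.2.2.1) :
    rqTerm α β ((h : ℂ) / D - 1 / (N * D ^ 2 * u)) p =
      (-1) ^ β * N ^ α * (D * u) ^ (α + β) *
        rqTerm β α (u + (v : ℂ) / D) (frickeConj N D h v k p) := by
  have hNC : (N : ℂ) ≠ 0 := Nat.cast_ne_zero.2 hN
  have hDC : (D : ℂ) ≠ 0 := Nat.cast_ne_zero.2 hD
  have hkC : (N * h * v + 1 : ℂ) = D * k := by exact_mod_cast hk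
  obtain ⟨a, b, c, d⟩ := p
  obtain ⟨c, rfl⟩ := hp
  have hrow := linear_at_fricke_point hNC hDC hu hkC
  have hab := eq_div_of_mul_eq (by positivity) (hrow a b)
  have hcd : (N * c : ℂ) * ((h : ℂ) / D - 1 / (N * D ^ 2 * u)) + d =
      -(-(N * c * h + d * D) * (u + v / D) + (c * k + d * v)) / (D * u) := by
    refine eq_div_of_mul_eq (by positivity) (mul_left_cancel₀ hNC ?_)
    linear_combination hrow (N * c) d
  simp only [rqTerm, frickeConj, Int.mul_ediv_cancel_left _ (Int.natCast_ne_zero.2 hN)]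
  push_cast
  rw [hab, hcd, mul_assoc (N : ℂ) D u, one_div, mul_inv, ← inv_pow, ← inv_pow, inv_div, inv_div,
    div_neg, neg_pow, div_pow, div_pow]
  ring

theorem Rq_at_fricke_point {N D w n : ℕ} (hN : N ≠ 0) (hD : D ≠ 0) (hw : Even w) (hn : n ≤ w)
    {h v k : ℤ} (hk : N * h * v + 1 = D * k) {u : ℂ} (hu : u ≠ 0) :
    Rq N w n ((h : ℂ) / D - 1 / (N * D ^ 2 * u)) =
      (-1) ^ (n + 1) * N ^ (w - n + 1) * (D * u) ^ (w + 2) * Rq N w (w - n) (u + (v : ℂ) / D) := by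
  have hexp : w - n + 1 + (n + 1) = w + 2 := by omega
  have hreindex : ∑' p : Gamma0Tuple N,
      rqTerm (n + 1) (w - n + 1) (u + (v : ℂ) / D) (frickeConj N D h v k p) =
      ∑' p : Gamma0Tuple N, rqTerm (n + 1) (w - n + 1) (u + (v : ℂ) / D) p :=
    (frickeEquiv hN hk).tsum_eq fun p ↦ rqTerm (n + 1) (w - n + 1) (u + (v : ℂ) / D) p
  rw [Rq_eq_tsum_rqTerm, Rq_eq_tsum_rqTerm, cconst_symm hw hn, Nat.sub_sub_self hn,
    tsum_congr fun p ↦ rqTerm_at_fricke_point _ _ hN hD hk hu p.2.2, tsum_mul_left, hexp,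
    hreindex]
  ring

theorem period_integrand_at_fricke_point {N D w n m : ℕ} (hN : N ≠ 0) (hD : D ≠ 0)
    (hw : Even w) (hn : n ≤ w) (hm : m ≤ w) {h v k : ℤ} (hk : N * h * v + 1 = D * k)
    {t : ℝ} (ht : 0 < t) :
    ((N * D ^ 2 : ℝ) * t ^ 2)⁻¹ • (Rq N w n (I * ↑((N * D ^ 2 : ℝ) * t)⁻¹ + (h : ℂ) / D) *
        (I * ↑((N * D ^ 2 : ℝ) * t)⁻¹) ^ m) =
      (-1) ^ (n + m) * (N : ℂ) ^ ((w : ℤ) - n - m) * (D : ℂ) ^ ((w : ℤ) - m - m) *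
        (Rq N w (w - n) (I * t + (v : ℂ) / D) * (I * t) ^ (w - m)) := by
  have hNC : (N : ℂ) ≠ 0 := Nat.cast_ne_zero.2 hN
  have hDC : (D : ℂ) ≠ 0 := Nat.cast_ne_zero.2 hD
  set u := I * t
  have hu : u ≠ 0 := mul_ne_zero I_ne_zero (ofReal_ne_zero.2 ht.ne')
  have hpoint : I * ↑((N * D ^ 2 : ℝ) * t)⁻¹ = -(N * D ^ 2 * u)⁻¹ := by
    push_cast
    rw [mul_inv (_ * _ : ℂ) u, mul_inv I, inv_I]
    ring
  have hjacobian (z : ℂ) : ((N * D ^ 2 : ℝ) * t ^ 2)⁻¹ • z = -(N * D ^ 2 * u ^ 2)⁻¹ * z := by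
    rw [real_smul, mul_pow, I_sq]
    push_cast
    ring
  rw [hjacobian, hpoint,
    show -(N * D ^ 2 * u)⁻¹ + (h : ℂ) / D = h / D - 1 / (N * D ^ 2 * u) by ring,
    Rq_at_fricke_point hN hD hw hn hk hu, pow_succ (N : ℂ), pow_sub₀ _ hNC hn, pow_sub₀ _ hu hm,
    neg_pow (_ * _ * u)⁻¹, inv_pow]
  simp only [zpow_sub₀ hNC, zpow_sub₀ hDC, zpow_natCast]
  field_simp
  ring

theorem rshift_Rn_functional_equation_general (N : ℕ) (hN : 1 ≤ N) (w : ℕ)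
    (hwe : Even w) (m n : ℕ) (hm : m ≤ w) (hnw : n ≤ w - 1)
    (D : ℕ) (hD : 1 < D) (h : ℤ)
    (v : ℤ) (hv : (D : ℤ) ∣ ((N : ℤ) * h * v + 1)) :
    rshift D m h (Rq N w n) =
      (-1) ^ (n + m) * (N : ℂ) ^ ((w : ℤ) - n - m) * (D : ℂ) ^ ((w : ℤ) - m - m) *
        rshift D (w - m) v (Rq N w (w - n)) := by
  obtain ⟨k, hk⟩ := hv
  have hK : (0 : ℝ) < N * D ^ 2 := by positivity
  rw [rshift, rshift, ← integral_Ioi_comp_inv_mul _ hK,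
    setIntegral_congr_fun measurableSet_Ioi fun t ht ↦ period_integrand_at_fricke_point
      (by omega) (by omega) hwe (by omega) hm hk ht, integral_const_mul]
  ring

/-- for `gcd(Nh, D) = 1` and `Nhv ≡ −1 (mod D)`,
`r_{m,h/D}(R_n) = (−1)^{n+m}·N^{ñ−m}·D^{m̃−m}·r_{m̃,v/D}(R_ñ)`. -/
theorem rshift_Rn_functional_equation (N : ℕ) (hN : 1 ≤ N) (w : ℕ) (hw : 2 ≤ w)
    (hwe : Even w) (m n : ℕ) (hm : m ≤ w) (hn1 : 1 ≤ n) (hnw : n ≤ w - 1)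
    (D : ℕ) (hD : 1 < D) (h : ℤ) (hh : Int.gcd ((N : ℤ) * h) D = 1)
    (v : ℤ) (hv : (D : ℤ) ∣ ((N : ℤ) * h * v + 1)) :
    rshift D m h (Rq N w n) =
      (-1) ^ (n + m) * (N : ℂ) ^ ((w : ℤ) - n - m) * (D : ℂ) ^ ((w : ℤ) - m - m) *
        rshift D (w - m) v (Rq N w (w - n)) :=
  rshift_Rn_functional_equation_general N hN w hwe m n hm hnw D hD h v hv

end
end
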